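/- arXiv:1903.05111 — 5 statements merged into one kernel-verified Lean document; each statement's English description precedes it below -/
import Mathlib

section
/- Let X ≥ 2, T ≥ 1 and t ≥ 1 be real, and set β = (log X + i/T)/2. Then |sinh((π + 2iβ)t)/sinh(πt) − X^{it} e^{−t/T}| ≤ 4 e^{−πt}. -/
lemma aux_id (a c : ℂ) (h : Complex.exp a - Complex.exp (-a) ≠ 0) :
    Complex.sinh (a + c) / Complex.sinh a - Complex.exp c =
      (Complex.exp (c - a) - Complex.exp (-a - c)) / (Complex.exp a - Complex.exp (-a)) := by
  have hsa : Complex.sinh a ≠ 0 := by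
    intro hh; apply h; rw [← Complex.two_sinh, hh, mul_zero]
  have key : Complex.sinh (a + c) - Complex.exp c * Complex.sinh a =
      (Complex.exp (c - a) - Complex.exp (-a - c)) / 2 := by
    have h1 : 2 * Complex.sinh (a + c) = Complex.exp (a + c) - Complex.exp (-(a + c)) :=
      Complex.two_sinh _
    have h2 : 2 * Complex.sinh a = Complex.exp a - Complex.exp (-a) := Complex.two_sinh _
    have e1 : Complex.exp (a + c) = Complex.exp a * Complex.exp c := Complex.exp_add _ _
    have e2 : Complex.exp (-(a + c)) = Complex.exp (-a) * Complex.exp (-c) := by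
      rw [← Complex.exp_add]; ring_nf
    have e3 : Complex.exp (c - a) = Complex.exp c * Complex.exp (-a) := by
      rw [← Complex.exp_add]; ring_nf
    have e4 : Complex.exp (-a - c) = Complex.exp (-a) * Complex.exp (-c) := by
      rw [← Complex.exp_add]; ring_nf
    rw [e3, e4]; linear_combination h1 / 2 - (Complex.exp c * h2) / 2 + e1 / 2 - e2 / 2
  have step : Complex.sinh (a + c) / Complex.sinh a - Complex.exp c =
      (Complex.sinh (a + c) - Complex.exp c * Complex.sinh a) / Complex.sinh a := by
    field_simp
  rw [step, key, ← Complex.two_sinh, div_div, mul_comm]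

/-- For `X ≥ 2`, `T ≥ 1`, `t ≥ 1` and `β = (log X + i/T)/2`, one has
`|sinh((π + 2iβ)t)/sinh(πt) − X^{it}e^{−t/T}| ≤ 4e^{−πt}`. -/
theorem bessel_kuznetsov_weight_approx (X T t : ℝ) (hX : 2 ≤ X) (hT : 1 ≤ T) (ht : 1 ≤ t) :
    ‖Complex.sinh (((Real.pi : ℂ) + 2 * Complex.I * (((Real.log X : ℂ) + Complex.I / T) / 2)) * t) /
            Complex.sinh ((Real.pi : ℂ) * t) -
          Complex.exp (Complex.I * t * Real.log X) * Real.exp (-t / T)‖ ≤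
      4 * Real.exp (-Real.pi * t) := by
  have hT0 : (0:ℝ) < T := lt_of_lt_of_le one_pos hT
  have ht0 : (0:ℝ) < t := lt_of_lt_of_le one_pos ht
  have hpi : (3:ℝ) < Real.pi := Real.pi_gt_three
  set a : ℂ := ((Real.pi * t : ℝ) : ℂ) with ha
  set c : ℂ := Complex.I * t * Real.log X - ((t / T : ℝ) : ℂ) with hc
  -- denominator nonzero
  have hDpos : (0:ℝ) < Real.exp (Real.pi * t) - Real.exp (-(Real.pi * t)) := by
    have : -(Real.pi * t) < Real.pi * t := by nlinarith
    linarith [Real.exp_lt_exp.2 this]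
  have hden : Complex.exp a - Complex.exp (-a) = ((Real.exp (Real.pi * t) - Real.exp (-(Real.pi * t)) : ℝ) : ℂ) := by
    simp only [ha, Complex.ofReal_sub, Complex.ofReal_exp, Complex.ofReal_neg]
  have hden_ne : Complex.exp a - Complex.exp (-a) ≠ 0 := by
    rw [hden]
    exact_mod_cast ne_of_gt hDpos
  -- rewrite the argument
  have harg : ((Real.pi : ℂ) + 2 * Complex.I * (((Real.log X : ℂ) + Complex.I / T) / 2)) * t = a + c := by
    rw [ha, hc]
    push_cast
    have : (Complex.I * Complex.I : ℂ) = -1 := Complex.I_mul_I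
    field_simp
    linear_combination ((t:ℂ) / T) * this
  have harg2 : (Real.pi : ℂ) * t = a := by rw [ha, Complex.ofReal_mul]
  have hw : Complex.exp (Complex.I * t * Real.log X) * (Real.exp (-t / T) : ℂ) = Complex.exp c := by
    rw [hc, Complex.ofReal_exp, ← Complex.exp_add]
    push_cast
    ring_nf
  rw [harg, harg2, hw, aux_id a c hden_ne, hden]
  rw [norm_div]
  have hnum : ‖Complex.exp (c - a) - Complex.exp (-a - c)‖ ≤
      Real.exp (-(t / T) - Real.pi * t) + Real.exp (-(Real.pi * t) + t / T) := by
    have h1 : ‖Complex.exp (c - a)‖ = Real.exp (-(t / T) - Real.pi * t) := by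
      rw [Complex.norm_exp]
      congr 1
      simp [hc, ha, Complex.sub_re, Complex.mul_re]
    have h2 : ‖Complex.exp (-a - c)‖ = Real.exp (-(Real.pi * t) + t / T) := by
      rw [Complex.norm_exp]
      congr 1
      simp [hc, ha, Complex.sub_re, Complex.neg_re, Complex.mul_re]
    calc ‖Complex.exp (c - a) - Complex.exp (-a - c)‖
        ≤ ‖Complex.exp (c - a)‖ + ‖Complex.exp (-a - c)‖ := by
          rw [sub_eq_add_neg]
          refine (norm_add_le _ _).trans ?_
          simp
      _ = _ := by rw [h1, h2]
  have habsden : ‖((Real.exp (Real.pi * t) - Real.exp (-(Real.pi * t)) : ℝ) : ℂ)‖ =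
      Real.exp (Real.pi * t) - Real.exp (-(Real.pi * t)) := by
    rw [Complex.norm_real, Real.norm_eq_abs, abs_of_pos hDpos]
  rw [habsden]
  rw [div_le_iff₀ hDpos]
  have hexp1 : Real.exp (-(t / T) - Real.pi * t) ≤ 1 := by
    apply Real.exp_le_one_iff.2
    have : 0 ≤ t / T := le_of_lt (div_pos ht0 hT0)
    nlinarith
  have hexp2 : Real.exp (-(Real.pi * t) + t / T) ≤ 1 := by
    apply Real.exp_le_one_iff.2
    have htT : t / T ≤ t := by
      rw [div_le_iff₀ hT0]; nlinarith
    nlinarith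
  have hprod : Real.exp (-Real.pi * t) * (Real.exp (Real.pi * t) - Real.exp (-(Real.pi * t))) =
      1 - Real.exp (-(2 * Real.pi * t)) := by
    rw [mul_sub, ← Real.exp_add, ← Real.exp_add]
    ring_nf
    rw [Real.exp_zero]
  have hsmall : Real.exp (-(2 * Real.pi * t)) ≤ 1/2 := by
    have h1 : Real.exp (-(2 * Real.pi * t)) ≤ Real.exp (-1) := by
      apply Real.exp_le_exp.2; nlinarith
    have h2 : Real.exp (-1) ≤ 1/2 := by
      rw [Real.exp_neg]
      rw [inv_le_iff_one_le_mul₀ (Real.exp_pos 1)]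
      nlinarith [Real.exp_one_gt_d9]
    linarith
  calc ‖Complex.exp (c - a) - Complex.exp (-a - c)‖
      ≤ Real.exp (-(t / T) - Real.pi * t) + Real.exp (-(Real.pi * t) + t / T) := hnum
    _ ≤ 2 := by linarith
    _ ≤ 4 * Real.exp (-Real.pi * t) * (Real.exp (Real.pi * t) - Real.exp (-(Real.pi * t))) := by
        rw [mul_assoc, hprod]; linarith
end

section
/- Let x > 1 be a fixed real number and let (b_n)_{n ≥ 2} be complex numbers with Σ_{n≥2} |b_n| < ∞. Define b_x := b_n if x = n for some integer n ≥ 2, and b_x := 0 otherwise. Then there is a constant C (depending on x and Σ|b_n| but not on T) such that for all T ≥ 1, |Σ_{n≥2} b_n ∫_1^T e^{it·log(x/n)} dt − T·b_x| ≤ C. -/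
open Complex

private lemma finset_pos_lb (s : Finset ℕ) (f : ℕ → ℝ) (h : ∀ n ∈ s, 0 < f n) :
    ∃ δ > 0, ∀ n ∈ s, δ ≤ f n := by
  classical
  induction s using Finset.induction with
  | empty => exact ⟨1, one_pos, by simp⟩
  | @insert a s ha ih =>
    obtain ⟨δ, hδ, hle⟩ := ih (fun n hn => h n (Finset.mem_insert_of_mem hn))
    refine ⟨min δ (f a), lt_min hδ (h a (Finset.mem_insert_self _ _)), fun n hn => ?_⟩
    rcases Finset.mem_insert.mp hn with rfl | hn
    · exact min_le_right _ _
    · exact le_trans (min_le_left _ _) (hle n hn)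

private lemma osc_bound (c : ℝ) (hc : c ≠ 0) (T : ℝ) :
    ‖∫ u in (1:ℝ)..T, Complex.exp (Complex.I * u * c)‖ ≤ 2 / |c| := by
  have h1 : ∀ u : ℝ, Complex.I * (u:ℂ) * (c:ℂ) = (Complex.I * c) * u := fun u => by ring
  have hc' : (Complex.I * c) ≠ 0 := by
    simp [Complex.ext_iff, hc]
  simp_rw [h1]
  rw [integral_exp_mul_complex hc', norm_div]
  have he : ∀ t : ℝ, ‖Complex.exp (Complex.I * c * t)‖ = 1 := by
    intro t
    rw [Complex.norm_exp]
    simp [mul_comm]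
  have he1 : ‖Complex.exp (Complex.I * c * 1)‖ = 1 := by
    rw [Complex.norm_exp]; simp
  have hnum : ‖Complex.exp (Complex.I * c * T) - Complex.exp (Complex.I * c * 1)‖ ≤ 2 := by
    calc ‖Complex.exp (Complex.I * c * T) - Complex.exp (Complex.I * c * 1)‖
        ≤ ‖Complex.exp (Complex.I * c * T)‖ + ‖Complex.exp (Complex.I * c * 1)‖ :=
          norm_sub_le _ _
      _ ≤ 2 := by rw [he, he1]; norm_num
  have hd : ‖Complex.I * c‖ = |c| := by
    simp
  rw [hd]
  exact (div_le_div_iff_of_pos_right (abs_pos.mpr hc)).mpr hnum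

/-- Landau-type detection lemma: for fixed `x > 1` and absolutely summable `(b_n)_{n≥2}`,
`Σ_{n≥2} b_n ∫_1^T e^{it log(x/n)} dt = T·b_x + O(1)`, where `b_x = b_n` if `x = n` and
`b_x = 0` otherwise. -/
theorem landau_detection (x : ℝ) (hx : 1 < x) (b : ℕ → ℂ)
    (hb : Summable fun n : {n : ℕ // 2 ≤ n} => ‖b n‖)
    (bx : ℂ)
    (hbx1 : ∀ n : ℕ, 2 ≤ n → (n : ℝ) = x → bx = b n)
    (hbx2 : (∀ n : ℕ, 2 ≤ n → (n : ℝ) ≠ x) → bx = 0) :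
    ∃ C : ℝ, ∀ T : ℝ, 1 ≤ T →
      ‖(∑' n : {n : ℕ // 2 ≤ n},
              b n * ∫ u in (1:ℝ)..T, Complex.exp (Complex.I * u * Real.log (x / (n : ℕ)))) -
            (T : ℂ) * bx‖ ≤ C := by
  classical
  set S := {n : ℕ // 2 ≤ n}
  -- uniform lower bound δ for |log (x/n)| when (n:ℝ) ≠ x
  set N : ℕ := ⌈x⌉₊ + 1 with hN
  have hxN : x < N := by
    have := Nat.le_ceil x
    push_cast [hN]
    linarith
  have hx0 : (0:ℝ) < x := by linarith
  obtain ⟨δ, hδpos, hδ⟩ := finset_pos_lb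
      ((Finset.Ico 2 N).filter (fun n => (n:ℝ) ≠ x))
      (fun n => |Real.log (x / n)|) (by
    intro n hn
    simp only [Finset.mem_filter, Finset.mem_Ico] at hn
    obtain ⟨⟨h2, _⟩, hne⟩ := hn
    have hn0 : (0:ℝ) < n := by positivity
    have h1 : x / n ≠ 1 := by
      intro h
      apply hne
      field_simp at h
      linarith [h]
    have : Real.log (x / n) ≠ 0 := by
      intro h
      rcases Real.log_eq_zero.mp h with h | h | h
      · exact absurd h (ne_of_gt (div_pos hx0 hn0))
      · exact h1 h
      · linarith [div_pos hx0 hn0]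
    exact abs_pos.mpr this)
  set δ0 : ℝ := min δ (Real.log ((N:ℝ) / x)) with hδ0
  have hδ0pos : 0 < δ0 := by
    apply lt_min hδpos
    apply Real.log_pos
    rw [lt_div_iff₀ hx0]
    linarith
  have key : ∀ n : ℕ, 2 ≤ n → (n:ℝ) ≠ x → δ0 ≤ |Real.log (x / n)| := by
    intro n h2 hne
    by_cases hlt : n < N
    · refine le_trans (min_le_left _ _) (hδ n ?_)
      simp [Finset.mem_filter, Finset.mem_Ico, h2, hlt, hne]
    · push_neg at hlt
      have hn0 : (0:ℝ) < n := by positivity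
      have hxn : x / n < 1 := by
        rw [div_lt_one hn0]
        calc x < N := hxN
          _ ≤ n := by exact_mod_cast hlt
      have hlog : Real.log (x / n) < 0 := Real.log_neg (by positivity) hxn
      refine le_trans (min_le_right _ _) ?_
      rw [abs_of_neg hlog, ← Real.log_inv]
      rw [inv_div]
      apply Real.log_le_log (by positivity)
      have hNn : (N:ℝ) ≤ (n:ℝ) := by exact_mod_cast hlt
      exact (div_le_div_iff_of_pos_right hx0).mpr hNn
  -- per-term bound for n with (n:ℝ) ≠ x
  have term_bound : ∀ (T : ℝ) (n : ℕ), 2 ≤ n → (n:ℝ) ≠ x →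
      ‖∫ u in (1:ℝ)..T, Complex.exp (Complex.I * u * Real.log (x / n))‖ ≤ 2 / δ0 := by
    intro T n h2 hne
    have hc : Real.log (x / n) ≠ 0 := by
      intro h
      have := key n h2 hne
      rw [h, abs_zero] at this
      linarith
    refine (osc_bound _ hc T).trans ?_
    apply div_le_div_of_nonneg_left (by norm_num) hδ0pos (key n h2 hne)
  set Sb : ℝ := ∑' n : S, ‖b n‖ with hSb
  have hSb0 : 0 ≤ Sb := tsum_nonneg (fun _ => norm_nonneg _)
  have hμ : (0:ℝ) < 2 / δ0 := div_pos two_pos hδ0pos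
  by_cases hint : ∃ n : ℕ, 2 ≤ n ∧ (n:ℝ) = x
  · -- x is an integer ≥ 2
    obtain ⟨n0, hn02, hn0x⟩ := hint
    have hbxn0 : bx = b n0 := hbx1 n0 hn02 hn0x
    refine ⟨‖b n0‖ + (2 / δ0) * Sb, fun T hT => ?_⟩
    set f : S → ℂ := fun n =>
      b n * ∫ u in (1:ℝ)..T, Complex.exp (Complex.I * u * Real.log (x / (n:ℕ))) with hf
    set n0' : S := ⟨n0, hn02⟩ with hn0'
    set g : S → ℂ := fun n => ite (n = n0') 0 (f n) with hg
    have hne' : ∀ n : S, n ≠ n0' → ((n:ℕ):ℝ) ≠ x := by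
      intro n h hc
      apply h
      apply Subtype.ext
      have : ((n:ℕ):ℝ) = ((n0:ℕ):ℝ) := by rw [hc, hn0x]
      exact_mod_cast this
    have hbd : ∀ n : S, ‖g n‖ ≤ (2 / δ0) * ‖b n‖ := by
      intro n
      by_cases h : n = n0'
      · simp only [hg, h, if_pos rfl, norm_zero]
        exact mul_nonneg hμ.le (norm_nonneg _)
      · simp only [hg, if_neg h, hf, norm_mul]
        rw [mul_comm (2/δ0)]
        exact mul_le_mul_of_nonneg_left (term_bound T n n.2 (hne' n h))
          (norm_nonneg _)
    have hgs : Summable g := Summable.of_norm_bounded (hb.mul_left _) hbd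
    have hgsn : Summable (fun n : S => ‖g n‖) :=
      Summable.of_nonneg_of_le (fun n => norm_nonneg _) hbd (hb.mul_left _)
    have hfn0 : f n0' = b n0 * (T - 1) := by
      simp only [hf, hn0']
      have hc : Real.log (x / (n0:ℕ)) = 0 := by
        rw [hn0x, div_self (ne_of_gt hx0), Real.log_one]
      rw [hc]
      have h0 : ∀ u : ℝ, Complex.I * (u:ℂ) * ((0:ℝ):ℂ) = 0 := fun u => by push_cast; ring
      rw [intervalIntegral.integral_congr (g := fun _ => (1:ℂ)) (fun u _ => by rw [h0]; simp)]
      simp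
    have hsf : Summable f := by
      have : f = fun n => g n + ite (n = n0') (f n0') 0 := by
        funext n
        by_cases h : n = n0' <;> simp [hg, h]
      rw [this]
      exact hgs.add (summable_of_finite_support (Set.Finite.subset (Set.finite_singleton n0')
        (by intro n hn
            simp only [Function.mem_support, ne_eq, ite_eq_right_iff, not_forall] at hn
            simp [hn.1])))
    have hsplit : (∑' n : S, f n) = f n0' + ∑' n : S, g n :=
      Summable.tsum_eq_add_tsum_ite hsf n0'
    have hRbound : ‖∑' n : S, g n‖ ≤ (2 / δ0) * Sb := by
      refine le_trans (norm_tsum_le_tsum_norm hgsn) ?_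
      rw [hSb, ← tsum_mul_left]
      exact Summable.tsum_le_tsum hbd hgsn (hb.mul_left _)
    have heq : (∑' n : S, f n) - (T:ℂ) * bx = (∑' n : S, g n) - b n0 := by
      rw [hsplit, hfn0, hbxn0]; ring
    rw [heq]
    calc ‖(∑' n : S, g n) - b n0‖
        ≤ ‖∑' n : S, g n‖ + ‖b n0‖ :=
          norm_sub_le _ _
      _ ≤ (2/δ0) * Sb + ‖b n0‖ := by linarith
      _ = ‖b n0‖ + (2/δ0) * Sb := by ring
  · -- x is not an integer value
    push_neg at hint
    have hbx0 : bx = 0 := hbx2 (fun n h2 => hint n h2)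
    refine ⟨(2 / δ0) * Sb, fun T hT => ?_⟩
    set f : S → ℂ := fun n =>
      b n * ∫ u in (1:ℝ)..T, Complex.exp (Complex.I * u * Real.log (x / (n:ℕ))) with hf
    have hbd : ∀ n : S, ‖f n‖ ≤ (2 / δ0) * ‖b n‖ := by
      intro n
      simp only [hf, norm_mul]
      rw [mul_comm (2/δ0)]
      exact mul_le_mul_of_nonneg_left (term_bound T n n.2 (hint n n.2)) (norm_nonneg _)
    have hfsn : Summable (fun n : S => ‖f n‖) :=
      Summable.of_nonneg_of_le (fun n => norm_nonneg _) hbd (hb.mul_left _)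
    rw [hbx0, mul_zero, sub_zero]
    refine le_trans (norm_tsum_le_tsum_norm hfsn) ?_
    rw [hSb, ← tsum_mul_left]
    exact Summable.tsum_le_tsum hbd hfsn (hb.mul_left _)
end

section
/- Let 0 < λ < 1 and p = 2/(2−λ). There is a constant C(λ) such that for every finitely supported sequence (a_k)_{k∈ℤ} of nonnegative reals, Σ_{k₁ ≠ k₂} a_{k₁} a_{k₂} / |k₁ − k₂|^{λ} ≤ C(λ) · (Σ_k a_k^p)^{2/p}. -/
open Finset

namespace HLP

noncomputable def winSum (a : ℤ →₀ ℝ) (k : ℤ) (r : ℕ) : ℝ :=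
  ∑ i ∈ Finset.Icc (k - r) (k + r), a i

noncomputable def winAvg (a : ℤ →₀ ℝ) (k : ℤ) (r : ℕ) : ℝ :=
  winSum a k r / (2 * r + 1)

noncomputable def maxFn (a : ℤ →₀ ℝ) (k : ℤ) : ℝ := ⨆ r : ℕ, winAvg a k r

noncomputable def tot (a : ℤ →₀ ℝ) : ℝ := ∑ k ∈ a.support, a k

lemma sum_le_tot (a : ℤ →₀ ℝ) (ha : ∀ k, 0 ≤ a k) (F : Finset ℤ) :
    ∑ i ∈ F, a i ≤ tot a := by
  have h1 : ∑ i ∈ F, a i = ∑ i ∈ F ∩ a.support, a i := by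
    refine (Finset.sum_subset (Finset.inter_subset_left) ?_).symm
    intro x hx hx2
    have : x ∉ a.support := fun h => hx2 (Finset.mem_inter.mpr ⟨hx, h⟩)
    simpa using this
  rw [h1, tot]
  exact Finset.sum_le_sum_of_subset_of_nonneg Finset.inter_subset_right
    (fun i _ _ => ha i)

lemma card_window (k : ℤ) (r : ℕ) : (Finset.Icc (k - r) (k + r)).card = 2 * r + 1 := by
  rw [Int.card_Icc]
  omega

lemma winSum_nonneg (a : ℤ →₀ ℝ) (ha : ∀ k, 0 ≤ a k) (k : ℤ) (r : ℕ) : 0 ≤ winSum a k r :=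
  Finset.sum_nonneg fun i _ => ha i

lemma winAvg_nonneg (a : ℤ →₀ ℝ) (ha : ∀ k, 0 ≤ a k) (k : ℤ) (r : ℕ) : 0 ≤ winAvg a k r :=
  div_nonneg (winSum_nonneg a ha k r) (by positivity)

lemma winAvg_le_tot (a : ℤ →₀ ℝ) (ha : ∀ k, 0 ≤ a k) (k : ℤ) (r : ℕ) :
    winAvg a k r ≤ tot a := by
  have h1 : winAvg a k r ≤ winSum a k r := by
    apply div_le_self (winSum_nonneg a ha k r)
    have : (0:ℝ) ≤ 2 * r := by positivity
    linarith
  exact h1.trans (sum_le_tot a ha _)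

lemma bddAbove_winAvg (a : ℤ →₀ ℝ) (ha : ∀ k, 0 ≤ a k) (k : ℤ) :
    BddAbove (Set.range (winAvg a k)) := by
  refine ⟨tot a, ?_⟩
  rintro x ⟨r, rfl⟩
  exact winAvg_le_tot a ha k r

lemma winAvg_le_maxFn (a : ℤ →₀ ℝ) (ha : ∀ k, 0 ≤ a k) (k : ℤ) (r : ℕ) :
    winAvg a k r ≤ maxFn a k :=
  le_ciSup (bddAbove_winAvg a ha k) r

lemma winSum_zero_eq (a : ℤ →₀ ℝ) (k : ℤ) : winSum a k 0 = a k := by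
  simp [winSum]

lemma apply_le_maxFn (a : ℤ →₀ ℝ) (ha : ∀ k, 0 ≤ a k) (k : ℤ) : a k ≤ maxFn a k := by
  have h := winAvg_le_maxFn a ha k 0
  rw [winAvg, winSum_zero_eq] at h
  simpa using h

lemma maxFn_nonneg (a : ℤ →₀ ℝ) (ha : ∀ k, 0 ≤ a k) (k : ℤ) : 0 ≤ maxFn a k :=
  (winAvg_nonneg a ha k 0).trans (winAvg_le_maxFn a ha k 0)

lemma maxFn_le (a : ℤ →₀ ℝ) {k : ℤ} {c : ℝ} (h : ∀ r, winAvg a k r ≤ c) : maxFn a k ≤ c :=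
  ciSup_le h

lemma maxFn_le_maxFn_add (a b : ℤ →₀ ℝ) (hb : ∀ k, 0 ≤ b k) (s : ℝ)
    (h : ∀ i, a i ≤ b i + s) (k : ℤ) : maxFn a k ≤ maxFn b k + s := by
  apply maxFn_le
  intro r
  have h1 : winSum a k r ≤ winSum b k r + (2 * r + 1) * s := by
    have := Finset.sum_le_sum (fun i (_ : i ∈ Finset.Icc (k - (r:ℤ)) (k + r)) => h i)
    rw [Finset.sum_add_distrib, Finset.sum_const, card_window] at this
    simpa [winSum, nsmul_eq_mul] using this
  have hpos : (0:ℝ) < 2 * r + 1 := by positivity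
  calc winAvg a k r = winSum a k r / (2 * r + 1) := rfl
    _ ≤ (winSum b k r + (2 * r + 1) * s) / (2 * r + 1) := by
        exact div_le_div_of_nonneg_right h1 hpos.le
    _ = winSum b k r / (2 * r + 1) + s := by field_simp
    _ ≤ maxFn b k + s := by
        have := winAvg_le_maxFn b hb k r
        rw [winAvg] at this
        linarith



lemma sum_le_lp_mul_card (F : Finset ℤ) (f : ℤ → ℝ) (hf : ∀ i, 0 ≤ f i)
    {p q : ℝ} (hpq : Real.HolderConjugate p q) :
    ∑ i ∈ F, f i ≤ (∑ i ∈ F, f i ^ p) ^ (1/p) * (F.card : ℝ) ^ (1/q) := by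
  have h := Real.inner_le_Lp_mul_Lq_of_nonneg F (f := f) (g := fun _ => 1) hpq
    (fun i _ => hf i) (fun i _ => zero_le_one)
  simpa using h

lemma geom_tail_le {x : ℝ} (hx0 : 0 ≤ x) (hx1 : x < 1) (n : ℕ) :
    ∑ i ∈ Finset.range n, x ^ i ≤ (1 - x)⁻¹ := by
  have h1x : 0 < 1 - x := by linarith
  have h : x ≠ 1 := ne_of_lt hx1
  have hxn : (0:ℝ) ≤ x ^ n := by positivity
  have e : (1 - x ^ n) / (1 - x) = (x ^ n - 1) / (x - 1) := by
    rw [show (1:ℝ) - x ^ n = -(x ^ n - 1) by ring, show (1:ℝ) - x = -(x - 1) by ring,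
      neg_div_neg_eq]
  rw [geom_sum_eq h, ← e, ← one_div]
  exact div_le_div₀ (zero_le_one) (by linarith) h1x le_rfl

lemma sum_zpow_le (S : Finset ℤ) (m : ℤ) (hS : ∀ z ∈ S, z ≤ m) (c : ℝ) (hc : 1 < c) :
    ∑ z ∈ S, c ^ z ≤ c ^ m * (1 - c⁻¹)⁻¹ := by
  have hc0 : (0:ℝ) < c := lt_trans one_pos hc
  have hinv : c⁻¹ < 1 := inv_lt_one_of_one_lt₀ hc
  have hinv0 : (0:ℝ) < c⁻¹ := by positivity
  have key : ∀ z ∈ S, c ^ z = c ^ m * (c⁻¹) ^ ((m - z).toNat) := by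
    intro z hz
    have hzm : z ≤ m := hS z hz
    have h1 : ((m - z).toNat : ℤ) = m - z := Int.toNat_of_nonneg (by omega)
    have h2 : (c⁻¹) ^ ((m - z).toNat) = c ^ (z - m) := by
      rw [← zpow_natCast c⁻¹, inv_zpow, ← zpow_neg, h1]
      congr 1; ring
    rw [h2, ← zpow_add₀ (ne_of_gt hc0)]
    congr 1; ring
  rw [Finset.sum_congr rfl key, ← Finset.mul_sum]
  refine mul_le_mul_of_nonneg_left ?_ (le_of_lt (zpow_pos hc0 m))
  have hinj : ∀ x ∈ S, ∀ y ∈ S, (m - x).toNat = (m - y).toNat → x = y := by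
    intro x hx y hy hxy
    have hx' := hS x hx; have hy' := hS y hy
    omega
  have himg := Finset.sum_image (s := S) (f := fun i : ℕ => (c⁻¹:ℝ) ^ i)
    (g := fun z => (m - z).toNat) hinj
  rw [← himg]
  set I := S.image (fun z => (m - z).toNat) with hI
  have hsub : I ⊆ Finset.range (I.sup id + 1) := by
    intro i hi
    simp only [Finset.mem_range]
    exact Nat.lt_succ_of_le (Finset.le_sup (f := id) hi)
  calc ∑ i ∈ I, (c⁻¹) ^ i ≤ ∑ i ∈ Finset.range (I.sup id + 1), (c⁻¹) ^ i :=
        Finset.sum_le_sum_of_subset_of_nonneg hsub (fun i _ _ => by positivity)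
    _ ≤ (1 - c⁻¹)⁻¹ := geom_tail_le (le_of_lt hinv0) hinv _



/-- Vitali-type covering lemma on ℤ. -/
lemma vitali (E : Finset ℤ) (r : ℤ → ℕ) :
    ∃ S : Finset ℤ, S ⊆ E ∧
      (∀ x ∈ S, ∀ y ∈ S, x ≠ y →
        Disjoint (Finset.Icc (x - r x) (x + r x)) (Finset.Icc (y - r y) (y + r y))) ∧
      E ⊆ S.biUnion (fun k => Finset.Icc (k - 3 * r k) (k + 3 * r k)) := by
  induction E using Finset.strongInduction with
  | _ E ih =>
    rcases E.eq_empty_or_nonempty with rfl | hne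
    · exact ⟨∅, by simp⟩
    obtain ⟨k0, hk0, hmax⟩ := E.exists_max_image r hne
    set B : Finset ℤ := Finset.Icc (k0 - 3 * r k0) (k0 + 3 * r k0) with hB
    set E' : Finset ℤ := E.filter (fun k => k ∉ B) with hE'
    have hk0B : k0 ∈ B := by
      simp only [hB, Finset.mem_Icc]
      omega
    have hss : E' ⊂ E := by
      refine Finset.filter_ssubset.mpr ⟨k0, hk0, by simp [hk0B]⟩
    obtain ⟨S', hS'E, hdisj, hcov⟩ := ih E' hss
    refine ⟨insert k0 S', ?_, ?_, ?_⟩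
    · intro x hx
      rcases Finset.mem_insert.mp hx with rfl | hx
      · exact hk0
      · exact (Finset.filter_subset _ _) (hS'E hx)
    · -- pairwise disjoint
      have hfar : ∀ y ∈ S', Disjoint (Finset.Icc (k0 - r k0) (k0 + r k0))
          (Finset.Icc (y - r y) (y + r y)) := by
        intro y hy
        have hyE' : y ∈ E' := hS'E hy
        have hyE : y ∈ E := (Finset.filter_subset _ _) hyE'
        have hynB : y ∉ B := (Finset.mem_filter.mp hyE').2
        have hry : r y ≤ r k0 := hmax y hyE
        rw [Finset.disjoint_left]
        intro t ht1 ht2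
        simp only [Finset.mem_Icc] at ht1 ht2
        have : y ∈ B := by
          simp only [hB, Finset.mem_Icc]
          have h1 : (r y : ℤ) ≤ r k0 := by exact_mod_cast hry
          omega
        exact hynB this
      intro x hx y hy hxy
      rcases Finset.mem_insert.mp hx with hx' | hx'
      · rcases Finset.mem_insert.mp hy with hy' | hy'
        · exact absurd (hx'.trans hy'.symm) hxy
        · rw [hx']; exact hfar y hy'
      · rcases Finset.mem_insert.mp hy with hy' | hy'
        · rw [hy']; exact (hfar x hx').symm
        · exact hdisj x hx' y hy' hxy
    · intro k hk
      by_cases hkB : k ∈ B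
      · exact Finset.mem_biUnion.mpr ⟨k0, Finset.mem_insert_self _ _, hkB⟩
      · have : k ∈ E' := Finset.mem_filter.mpr ⟨hk, hkB⟩
        obtain ⟨j, hj, hkj⟩ := Finset.mem_biUnion.mp (hcov this)
        exact Finset.mem_biUnion.mpr ⟨j, Finset.mem_insert_of_mem hj, hkj⟩


lemma weak_type (b : ℤ →₀ ℝ) (hb : ∀ k, 0 ≤ b k) {t : ℝ} (ht : 0 < t)
    (E : Finset ℤ) (hE : ∀ k ∈ E, t < maxFn b k) :
    (E.card : ℝ) * t ≤ 3 * tot b := by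
  classical
  set r : ℤ → ℕ := fun k => if h : ∃ r, t < winAvg b k r then h.choose else 0 with hr
  have hrE : ∀ k ∈ E, t < winAvg b k (r k) := by
    intro k hk
    have h1 : t < ⨆ n : ℕ, winAvg b k n := hE k hk
    have h2 : ∃ n : ℕ, t < winAvg b k n :=
      (lt_ciSup_iff (bddAbove_winAvg b hb k)).mp h1
    simp only [hr, dif_pos h2]
    exact h2.choose_spec
  obtain ⟨S, hSE, hdisj, hcov⟩ := vitali E r
  have hcard : (E.card : ℝ) ≤ ∑ k ∈ S, (6 * (r k : ℝ) + 1) := by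
    have h1 : E.card ≤ ∑ k ∈ S, (Finset.Icc (k - 3 * (r k : ℤ)) (k + 3 * r k)).card :=
      le_trans (Finset.card_le_card hcov) (Finset.card_biUnion_le)
    have h2 : ∀ k : ℤ, ((Finset.Icc (k - 3 * (r k : ℤ)) (k + 3 * r k)).card : ℝ)
        = 6 * (r k : ℝ) + 1 := by
      intro k
      rw [Int.card_Icc]
      have : (k + 3 * (r k : ℤ) + 1 - (k - 3 * r k)).toNat = 6 * r k + 1 := by omega
      rw [this]
      push_cast
      ring
    calc (E.card : ℝ) ≤ ∑ k ∈ S, ((Finset.Icc (k - 3 * (r k : ℤ)) (k + 3 * r k)).card : ℝ) := by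
          exact_mod_cast h1
      _ = ∑ k ∈ S, (6 * (r k : ℝ) + 1) := Finset.sum_congr rfl fun k _ => h2 k
  have hwin : ∀ k ∈ S, t * (2 * (r k : ℝ) + 1) ≤ winSum b k (r k) := by
    intro k hk
    have h1 := hrE k (hSE hk)
    rw [winAvg] at h1
    have hpos : (0:ℝ) < 2 * (r k : ℝ) + 1 := by positivity
    rw [lt_div_iff₀ hpos] at h1
    linarith
  have hsum : ∑ k ∈ S, winSum b k (r k) ≤ tot b := by
    have hpd : (↑S : Set ℤ).PairwiseDisjoint
        (fun k => Finset.Icc (k - (r k : ℤ)) (k + r k)) := by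
      intro x hx y hy hxy
      exact hdisj x hx y hy hxy
    have h1 : ∑ k ∈ S, winSum b k (r k)
        = ∑ i ∈ S.biUnion (fun k => Finset.Icc (k - (r k : ℤ)) (k + r k)), b i :=
      (Finset.sum_biUnion hpd).symm
    rw [h1]
    exact sum_le_tot b hb _
  calc (E.card : ℝ) * t ≤ (∑ k ∈ S, (6 * (r k : ℝ) + 1)) * t :=
        mul_le_mul_of_nonneg_right hcard ht.le
    _ ≤ (∑ k ∈ S, 3 * (2 * (r k : ℝ) + 1)) * t := by
        apply mul_le_mul_of_nonneg_right _ ht.le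
        apply Finset.sum_le_sum
        intro k _
        linarith
    _ = 3 * ∑ k ∈ S, t * (2 * (r k : ℝ) + 1) := by
        rw [Finset.mul_sum, Finset.sum_mul]
        congr 1
        ext k
        ring
    _ ≤ 3 * ∑ k ∈ S, winSum b k (r k) := by
        apply mul_le_mul_of_nonneg_left _ (by norm_num)
        exact Finset.sum_le_sum hwin
    _ ≤ 3 * tot b := mul_le_mul_of_nonneg_left hsum (by norm_num)


noncomputable def CM (p : ℝ) : ℝ :=
  6 * 2 ^ p * 8 ^ (p - 1) * (1 - ((2:ℝ) ^ (p - 1))⁻¹)⁻¹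

lemma CM_pos {p : ℝ} (hp : 1 < p) : 0 < CM p := by
  rw [CM]
  have h1 : (1:ℝ) < (2:ℝ) ^ (p - 1) :=
    (Real.one_lt_rpow_iff_of_pos (by norm_num)).mpr (Or.inl ⟨by norm_num, by linarith⟩)
  have h2 : ((2:ℝ) ^ (p - 1))⁻¹ < 1 := inv_lt_one_of_one_lt₀ h1
  have h3 : (0:ℝ) < 1 - ((2:ℝ) ^ (p - 1))⁻¹ := by linarith
  have h4 : (0:ℝ) < (2:ℝ) ^ p := Real.rpow_pos_of_pos (by norm_num) _
  have h5 : (0:ℝ) < (8:ℝ) ^ (p - 1) := Real.rpow_pos_of_pos (by norm_num) _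
  positivity

lemma strong_type (a : ℤ →₀ ℝ) (ha : ∀ k, 0 ≤ a k) {p : ℝ} (hp1 : 1 < p) :
    ∑ k ∈ a.support, (maxFn a k) ^ p ≤ CM p * ∑ k ∈ a.support, (a k) ^ p := by
  classical
  set c : ℝ := (2:ℝ) ^ (p - 1) with hc
  have hc1 : 1 < c := by
    rw [hc]
    exact Real.one_lt_rpow_iff_of_pos (by norm_num) |>.mpr (Or.inl ⟨by norm_num, by linarith⟩)
  have hc0 : (0:ℝ) < c := lt_trans one_pos hc1
  have hgeo : (0:ℝ) < (1 - c⁻¹)⁻¹ := by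
    have : c⁻¹ < 1 := inv_lt_one_of_one_lt₀ hc1
    have : (0:ℝ) < 1 - c⁻¹ := by linarith
    positivity
  -- positivity of a on support
  have hpos : ∀ k ∈ a.support, 0 < a k := fun k hk =>
    lt_of_le_of_ne (ha k) (Ne.symm (Finsupp.mem_support_iff.mp hk))
  have hMpos : ∀ k ∈ a.support, 0 < maxFn a k := fun k hk =>
    lt_of_lt_of_le (hpos k hk) (apply_le_maxFn a ha k)
  -- dyadic level of maxFn
  set z : ℤ → ℤ := fun k => ⌊Real.logb 2 (maxFn a k)⌋ with hz
  have hzle : ∀ k ∈ a.support, (2:ℝ) ^ ((z k : ℝ)) ≤ maxFn a k := by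
    intro k hk
    have h1 : ((z k : ℝ)) ≤ Real.logb 2 (maxFn a k) := Int.floor_le _
    calc (2:ℝ) ^ ((z k : ℝ)) ≤ (2:ℝ) ^ Real.logb 2 (maxFn a k) :=
          Real.rpow_le_rpow_of_exponent_le one_le_two h1
      _ = maxFn a k := Real.rpow_logb (by norm_num) (by norm_num) (hMpos k hk)
  have hzlt : ∀ k ∈ a.support, maxFn a k < 2 * (2:ℝ) ^ ((z k : ℝ)) := by
    intro k hk
    have h1 : Real.logb 2 (maxFn a k) < (z k : ℝ) + 1 := Int.lt_floor_add_one _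
    calc maxFn a k = (2:ℝ) ^ Real.logb 2 (maxFn a k) :=
          (Real.rpow_logb (by norm_num) (by norm_num) (hMpos k hk)).symm
      _ < (2:ℝ) ^ ((z k : ℝ) + 1) := Real.rpow_lt_rpow_of_exponent_lt (by norm_num) h1
      _ = 2 * (2:ℝ) ^ ((z k : ℝ)) := by
          rw [Real.rpow_add (by norm_num), Real.rpow_one]; ring
  -- step 1: Σ M^p ≤ 2^p Σ_k (2^{z k})^p
  have step1 : ∑ k ∈ a.support, (maxFn a k) ^ p
      ≤ (2:ℝ) ^ p * ∑ k ∈ a.support, ((2:ℝ) ^ ((z k : ℝ))) ^ p := by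
    rw [Finset.mul_sum]
    apply Finset.sum_le_sum
    intro k hk
    have h1 : maxFn a k ≤ 2 * (2:ℝ) ^ ((z k : ℝ)) := (hzlt k hk).le
    calc (maxFn a k) ^ p ≤ (2 * (2:ℝ) ^ ((z k : ℝ))) ^ p :=
          Real.rpow_le_rpow (maxFn_nonneg a ha k) h1 (by linarith)
      _ = (2:ℝ) ^ p * ((2:ℝ) ^ ((z k : ℝ))) ^ p :=
          Real.mul_rpow (by norm_num) (Real.rpow_nonneg (by norm_num) _)
  -- step 2: fiber decomposition over values of z
  set Z : Finset ℤ := a.support.image z with hZ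
  have step2 : ∑ k ∈ a.support, ((2:ℝ) ^ ((z k : ℝ))) ^ p
      = ∑ zv ∈ Z, ∑ k ∈ a.support.filter (fun k => z k = zv), ((2:ℝ) ^ ((zv : ℝ))) ^ p := by
    rw [← Finset.sum_fiberwise_of_maps_to (g := z) (t := Z)
      (fun x hx => Finset.mem_image_of_mem z hx) (fun k => ((2:ℝ) ^ ((z k : ℝ))) ^ p)]
    apply Finset.sum_congr rfl
    intro zv _
    apply Finset.sum_congr rfl
    intro k hk
    rw [(Finset.mem_filter.mp hk).2]
  -- step 3: per-level bound via weak type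
  have step3 : ∀ zv ∈ Z, ∑ k ∈ a.support.filter (fun k => z k = zv), ((2:ℝ) ^ ((zv : ℝ))) ^ p
      ≤ 6 * ((2:ℝ) ^ ((zv : ℝ))) ^ (p - 1) *
        ∑ i ∈ a.support.filter (fun i => (2:ℝ) ^ ((zv : ℝ)) / 4 < a i), a i := by
    intro zv _
    set v : ℝ := (2:ℝ) ^ ((zv : ℝ)) with hv
    have hv0 : 0 < v := Real.rpow_pos_of_pos (by norm_num) _
    set b : ℤ →₀ ℝ := a.filter (fun i => v / 4 < a i) with hb
    have hbnn : ∀ i, 0 ≤ b i := by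
      intro i
      rw [hb, Finsupp.filter_apply]
      split
      · exact ha i
      · exact le_rfl
    have hab : ∀ i, a i ≤ b i + v / 4 := by
      intro i
      rw [hb, Finsupp.filter_apply]
      by_cases h : v / 4 < a i
      · rw [if_pos h]; linarith
      · rw [if_neg h]; push_neg at h; simp; linarith
    set F : Finset ℤ := a.support.filter (fun k => z k = zv) with hF
    have hMF : ∀ k ∈ F, v / 2 < maxFn b k := by
      intro k hk
      have hks : k ∈ a.support := (Finset.mem_filter.mp hk).1
      have hkz : z k = zv := (Finset.mem_filter.mp hk).2
      have h1 : v ≤ maxFn a k := by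
        have := hzle k hks
        rwa [hkz] at this
      have h2 : maxFn a k ≤ maxFn b k + v / 4 :=
        maxFn_le_maxFn_add a b hbnn (v / 4) hab k
      linarith
    have hwk := weak_type b hbnn (t := v / 2) (by positivity) F hMF
    -- card bound
    have hcard : (F.card : ℝ) * v ^ p ≤ 6 * tot b * v ^ (p - 1) := by
      have hvp : v ^ p = v ^ (p - 1) * v := by
        rw [← Real.rpow_add_one (ne_of_gt hv0)]
        ring_nf
      rw [hvp]
      calc (F.card : ℝ) * (v ^ (p - 1) * v) = ((F.card : ℝ) * (v / 2)) * (2 * v ^ (p - 1)) := by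
            ring
        _ ≤ (3 * tot b) * (2 * v ^ (p - 1)) := by
            apply mul_le_mul_of_nonneg_right hwk
            have : (0:ℝ) ≤ v ^ (p - 1) := Real.rpow_nonneg hv0.le _
            linarith
        _ = 6 * tot b * v ^ (p - 1) := by ring
    have htot : tot b = ∑ i ∈ a.support.filter (fun i => v / 4 < a i), a i := by
      rw [tot, hb]
      rw [Finsupp.support_filter]
      apply Finset.sum_congr rfl
      intro i hi
      rw [Finsupp.filter_apply, if_pos (Finset.mem_filter.mp hi).2]
    calc ∑ k ∈ F, v ^ p = (F.card : ℝ) * v ^ p := by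
          rw [Finset.sum_const, nsmul_eq_mul]
      _ ≤ 6 * tot b * v ^ (p - 1) := hcard
      _ = 6 * v ^ (p - 1) * ∑ i ∈ a.support.filter (fun i => v / 4 < a i), a i := by
          rw [htot]; ring
  -- step 4: swap order of summation
  have step4 : ∑ zv ∈ Z, 6 * ((2:ℝ) ^ ((zv : ℝ))) ^ (p - 1) *
        ∑ i ∈ a.support.filter (fun i => (2:ℝ) ^ ((zv : ℝ)) / 4 < a i), a i
      = ∑ i ∈ a.support, a i *
        ∑ zv ∈ Z.filter (fun zv : ℤ => (2:ℝ) ^ ((zv : ℝ)) / 4 < a i),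
          6 * ((2:ℝ) ^ ((zv : ℝ))) ^ (p - 1) := by
    have lhs_eq : ∀ zv : ℤ, 6 * ((2:ℝ) ^ ((zv : ℝ))) ^ (p - 1) *
        ∑ i ∈ a.support.filter (fun i => (2:ℝ) ^ ((zv : ℝ)) / 4 < a i), a i
        = ∑ i ∈ a.support, (if (2:ℝ) ^ ((zv : ℝ)) / 4 < a i then
            6 * ((2:ℝ) ^ ((zv : ℝ))) ^ (p - 1) * a i else 0) := by
      intro zv
      rw [Finset.mul_sum, Finset.sum_filter]
    rw [Finset.sum_congr rfl (fun zv _ => lhs_eq zv), Finset.sum_comm]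
    apply Finset.sum_congr rfl
    intro i _
    rw [Finset.mul_sum, Finset.sum_filter]
    apply Finset.sum_congr rfl
    intro zv _
    split <;> [ring; simp]
  -- step 5: inner geometric sum
  have step5 : ∀ i ∈ a.support,
      ∑ zv ∈ Z.filter (fun zv : ℤ => (2:ℝ) ^ ((zv : ℝ)) / 4 < a i),
        6 * ((2:ℝ) ^ ((zv : ℝ))) ^ (p - 1)
      ≤ 6 * 8 ^ (p - 1) * (1 - c⁻¹)⁻¹ * (a i) ^ (p - 1) := by
    intro i hi
    have hai : 0 < a i := hpos i hi
    have hzpow : ∀ zv : ℤ, ((2:ℝ) ^ ((zv : ℝ))) ^ (p - 1) = c ^ zv := by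
      intro zv
      rw [← Real.rpow_mul (by norm_num : (0:ℝ) ≤ 2), mul_comm,
        Real.rpow_mul (by norm_num : (0:ℝ) ≤ 2), Real.rpow_intCast]
    set m : ℤ := ⌈Real.logb 2 (4 * a i)⌉ with hm
    have hcond : ∀ zv ∈ Z.filter (fun zv : ℤ => (2:ℝ) ^ ((zv : ℝ)) / 4 < a i), zv ≤ m := by
      intro zv hzv
      have h1 : (2:ℝ) ^ ((zv : ℝ)) / 4 < a i := (Finset.mem_filter.mp hzv).2
      have h2 : (2:ℝ) ^ ((zv : ℝ)) < 4 * a i := by linarith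
      have h3 : ((zv : ℝ)) < Real.logb 2 (4 * a i) := by
        have h4 : (2:ℝ) ^ ((zv : ℝ)) < (2:ℝ) ^ (Real.logb 2 (4 * a i)) := by
          rwa [Real.rpow_logb (by norm_num) (by norm_num) (by positivity)]
        exact (Real.rpow_lt_rpow_left_iff (by norm_num)).mp h4
      have h5 : ((zv : ℝ)) ≤ (m : ℝ) := le_trans h3.le (Int.le_ceil _)
      exact_mod_cast h5
    have hsum := sum_zpow_le (Z.filter (fun zv : ℤ => (2:ℝ) ^ ((zv : ℝ)) / 4 < a i)) m hcond c hc1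
    have hcm : c ^ m ≤ 8 ^ (p - 1) * (a i) ^ (p - 1) := by
      have h1 : (m : ℝ) < Real.logb 2 (4 * a i) + 1 := Int.ceil_lt_add_one _
      have h2 : (2:ℝ) ^ ((m : ℝ)) ≤ 8 * a i := by
        calc (2:ℝ) ^ ((m : ℝ)) ≤ (2:ℝ) ^ (Real.logb 2 (4 * a i) + 1) :=
              Real.rpow_le_rpow_of_exponent_le one_le_two h1.le
          _ = 8 * a i := by
              rw [Real.rpow_add (by norm_num), Real.rpow_one,
                Real.rpow_logb (by norm_num) (by norm_num) (by positivity)]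
              ring
      calc c ^ m = ((2:ℝ) ^ ((m : ℝ))) ^ (p - 1) := (hzpow m).symm
        _ ≤ (8 * a i) ^ (p - 1) :=
            Real.rpow_le_rpow (Real.rpow_nonneg (by norm_num) _) h2 (by linarith)
        _ = 8 ^ (p - 1) * (a i) ^ (p - 1) := Real.mul_rpow (by norm_num) hai.le
    calc ∑ zv ∈ Z.filter (fun zv : ℤ => (2:ℝ) ^ ((zv : ℝ)) / 4 < a i),
          6 * ((2:ℝ) ^ ((zv : ℝ))) ^ (p - 1)
        = 6 * ∑ zv ∈ Z.filter (fun zv : ℤ => (2:ℝ) ^ ((zv : ℝ)) / 4 < a i), c ^ zv := by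
          rw [Finset.mul_sum]
          exact Finset.sum_congr rfl fun zv _ => by rw [hzpow zv]
      _ ≤ 6 * (c ^ m * (1 - c⁻¹)⁻¹) := by
          apply mul_le_mul_of_nonneg_left hsum (by norm_num)
      _ ≤ 6 * ((8 ^ (p - 1) * (a i) ^ (p - 1)) * (1 - c⁻¹)⁻¹) := by
          apply mul_le_mul_of_nonneg_left _ (by norm_num)
          exact mul_le_mul_of_nonneg_right hcm hgeo.le
      _ = 6 * 8 ^ (p - 1) * (1 - c⁻¹)⁻¹ * (a i) ^ (p - 1) := by ring
  -- assemble
  have final : ∑ k ∈ a.support, (maxFn a k) ^ p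
      ≤ (2:ℝ) ^ p * ∑ i ∈ a.support, a i * (6 * 8 ^ (p - 1) * (1 - c⁻¹)⁻¹ * (a i) ^ (p - 1)) := by
    refine step1.trans ?_
    apply mul_le_mul_of_nonneg_left _ (Real.rpow_nonneg (by norm_num) p)
    rw [step2]
    calc ∑ zv ∈ Z, ∑ k ∈ a.support.filter (fun k => z k = zv), ((2:ℝ) ^ ((zv : ℝ))) ^ p
        ≤ ∑ zv ∈ Z, 6 * ((2:ℝ) ^ ((zv : ℝ))) ^ (p - 1) *
            ∑ i ∈ a.support.filter (fun i => (2:ℝ) ^ ((zv : ℝ)) / 4 < a i), a i :=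
          Finset.sum_le_sum step3
      _ = ∑ i ∈ a.support, a i *
            ∑ zv ∈ Z.filter (fun zv : ℤ => (2:ℝ) ^ ((zv : ℝ)) / 4 < a i),
              6 * ((2:ℝ) ^ ((zv : ℝ))) ^ (p - 1) := step4
      _ ≤ ∑ i ∈ a.support, a i * (6 * 8 ^ (p - 1) * (1 - c⁻¹)⁻¹ * (a i) ^ (p - 1)) := by
          apply Finset.sum_le_sum
          intro i hi
          exact mul_le_mul_of_nonneg_left (step5 i hi) (ha i)
  refine final.trans ?_
  rw [CM, Finset.mul_sum, Finset.mul_sum]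
  apply Finset.sum_le_sum
  intro i hi
  have hai : 0 < a i := hpos i hi
  have hap : a i * (a i) ^ (p - 1) = (a i) ^ p := by
    nth_rewrite 1 [← Real.rpow_one (a i)]
    rw [← Real.rpow_add hai]
    congr 1
    ring
  calc (2:ℝ) ^ p * (a i * (6 * 8 ^ (p - 1) * (1 - c⁻¹)⁻¹ * (a i) ^ (p - 1)))
      = 6 * 2 ^ p * 8 ^ (p - 1) * (1 - c⁻¹)⁻¹ * (a i * (a i) ^ (p - 1)) := by ring
    _ = 6 * 2 ^ p * 8 ^ (p - 1) * (1 - c⁻¹)⁻¹ * (a i) ^ p := by rw [hap]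
    _ ≤ 6 * 2 ^ p * 8 ^ (p - 1) * (1 - ((2:ℝ) ^ (p - 1))⁻¹)⁻¹ * (a i) ^ p := le_of_eq (by rw [hc])


lemma pow_rpow_comm (x : ℝ) (hx : 0 ≤ x) (e : ℝ) (j : ℕ) :
    ((x ^ j : ℝ)) ^ e = (x ^ e) ^ j := by
  rw [← Real.rpow_natCast x j, ← Real.rpow_mul hx, mul_comm, Real.rpow_mul hx,
    Real.rpow_natCast]

lemma sum_rpow_le (a : ℤ →₀ ℝ) (ha : ∀ k, 0 ≤ a k) {p : ℝ} (hp : p ≠ 0) (F : Finset ℤ) :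
    ∑ i ∈ F, (a i) ^ p ≤ ∑ i ∈ a.support, (a i) ^ p := by
  have h1 : ∑ i ∈ F, (a i) ^ p = ∑ i ∈ F ∩ a.support, (a i) ^ p := by
    refine (Finset.sum_subset (Finset.inter_subset_left) ?_).symm
    intro x hx hx2
    have hx3 : x ∉ a.support := fun h => hx2 (Finset.mem_inter.mpr ⟨hx, h⟩)
    have : a x = 0 := by simpa using hx3
    rw [this, Real.zero_rpow hp]
  rw [h1]
  refine Finset.sum_le_sum_of_subset_of_nonneg Finset.inter_subset_right ?_
  intro i _ _
  exact Real.rpow_nonneg (ha i) _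

lemma maxFn_le_lp (a : ℤ →₀ ℝ) (ha : ∀ k, 0 ≤ a k) {p q : ℝ}
    (hpq : Real.HolderConjugate p q) (k : ℤ) :
    maxFn a k ≤ (∑ i ∈ a.support, (a i) ^ p) ^ (1/p) := by
  apply maxFn_le
  intro r
  set Tp : ℝ := ∑ i ∈ a.support, (a i) ^ p with hTp
  have hTp0 : 0 ≤ Tp := Finset.sum_nonneg fun i _ => Real.rpow_nonneg (ha i) _
  have h1 : winSum a k r ≤ Tp ^ (1/p) * ((2 * (r:ℝ) + 1)) ^ (1/q) := by
    have h2 := sum_le_lp_mul_card (Finset.Icc (k - (r:ℤ)) (k + r)) a ha hpq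
    rw [card_window] at h2
    refine le_trans h2 ?_
    have h3 : ∑ i ∈ Finset.Icc (k - (r:ℤ)) (k + r), (a i) ^ p ≤ Tp :=
      sum_rpow_le a ha (ne_of_gt hpq.pos) _
    have h4 : ((2 * r + 1 : ℕ) : ℝ) = 2 * (r:ℝ) + 1 := by push_cast; ring
    rw [h4]
    apply mul_le_mul_of_nonneg_right _ (Real.rpow_nonneg (by positivity) _)
    exact Real.rpow_le_rpow (Finset.sum_nonneg fun i _ => Real.rpow_nonneg (ha i) _) h3
      (by have := hpq.pos; positivity)
  rw [winAvg]
  have hr0 : (0:ℝ) ≤ (r:ℝ) := Nat.cast_nonneg r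
  have hr1 : (1:ℝ) ≤ 2 * (r:ℝ) + 1 := by linarith
  have hrpos : (0:ℝ) < 2 * (r:ℝ) + 1 := by linarith
  rw [div_le_iff₀ hrpos]
  refine h1.trans ?_
  apply mul_le_mul_of_nonneg_left _ (Real.rpow_nonneg hTp0 _)
  calc ((2 * (r:ℝ) + 1)) ^ (1/q) ≤ ((2 * (r:ℝ) + 1)) ^ (1:ℝ) := by
        apply Real.rpow_le_rpow_of_exponent_le hr1
        rw [div_le_one hpq.symm.pos]
        exact hpq.symm.lt.le
    _ = 2 * (r:ℝ) + 1 := Real.rpow_one _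

lemma sum_min_split (u v : ℕ → ℝ) (hu : ∀ j, 0 ≤ u j) (hv : ∀ j, 0 ≤ v j) (Jm J : ℕ) :
    ∑ j ∈ Finset.range Jm, min (u j) (v j) ≤
      ∑ j ∈ Finset.range J, u j + ∑ j ∈ Finset.Ico J Jm, v j := by
  rcases le_or_gt J Jm with h | h
  · have hsplit : ∑ j ∈ Finset.range Jm, min (u j) (v j)
        = ∑ j ∈ Finset.range J, min (u j) (v j) + ∑ j ∈ Finset.Ico J Jm, min (u j) (v j) := by
      rw [Finset.range_eq_Ico, Finset.range_eq_Ico]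
      exact (Finset.sum_Ico_consecutive (fun j => min (u j) (v j)) (Nat.zero_le J) h).symm
    rw [hsplit]
    exact add_le_add (Finset.sum_le_sum fun j _ => min_le_left _ _)
      (Finset.sum_le_sum fun j _ => min_le_right _ _)
  · have hone : ∑ j ∈ Finset.range Jm, min (u j) (v j) ≤ ∑ j ∈ Finset.range J, u j := by
      refine le_trans (Finset.sum_le_sum fun j _ => min_le_left (u j) (v j)) ?_
      exact Finset.sum_le_sum_of_subset_of_nonneg
        (Finset.range_subset_range.mpr h.le) (fun j _ _ => hu j)
    have htwo : (0:ℝ) ≤ ∑ j ∈ Finset.Ico J Jm, v j := Finset.sum_nonneg fun j _ => hv j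
    linarith

lemma exists_pow_between {X : ℝ} (hX : 1 ≤ X) : ∃ J : ℕ, X ≤ 2 ^ J ∧ ((2:ℝ) ^ J) ≤ 2 * X := by
  obtain ⟨n, hn⟩ := pow_unbounded_of_one_lt X (by norm_num : (1:ℝ) < 2)
  have hex : ∃ m : ℕ, X ≤ 2 ^ m := ⟨n, hn.le⟩
  classical
  set J := Nat.find hex with hJ
  have h1 : X ≤ 2 ^ J := Nat.find_spec hex
  refine ⟨J, h1, ?_⟩
  rcases Nat.eq_zero_or_pos J with h | h
  · rw [h]; simpa using by linarith
  · have h2 : ¬ (X ≤ 2 ^ (J - 1)) := Nat.find_min hex (by omega)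
    push_neg at h2
    have h3 : (2:ℝ) ^ J = 2 * 2 ^ (J - 1) := by
      rw [← pow_succ']
      congr 1
      omega
    rw [h3]
    nlinarith


lemma geom_Ico_le {y : ℝ} (hy0 : 0 ≤ y) (hy1 : y < 1) (J Jm : ℕ) :
    ∑ j ∈ Finset.Ico J Jm, y ^ j ≤ y ^ J * (1 - y)⁻¹ := by
  rw [Finset.sum_Ico_eq_sum_range]
  rw [Finset.sum_congr rfl (fun i _ => pow_add y J i), ← Finset.mul_sum]
  exact mul_le_mul_of_nonneg_left (geom_tail_le hy0 hy1 _) (pow_nonneg hy0 J)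

lemma hedberg (lam : ℝ) (h0 : 0 < lam) (h1 : lam < 1) (a : ℤ →₀ ℝ) (ha : ∀ k, 0 ≤ a k)
    (k : ℤ) (hk : k ∈ a.support) :
    ∑ k2 ∈ a.support.erase k, a k2 / |(k:ℝ) - (k2:ℝ)| ^ lam ≤
      (16 * ((2:ℝ) ^ (1 - lam) - 1)⁻¹ + 8 * (1 - (2:ℝ) ^ (-(lam / 2)))⁻¹) *
        ((maxFn a k) ^ (lam / (2 - lam)) *
          ((∑ i ∈ a.support, a i ^ (2 / (2 - lam))) ^ ((2 - lam) / 2)) ^ (1 - lam / (2 - lam))) := by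
  classical
  have h2l : (0:ℝ) < 2 - lam := by linarith
  set p : ℝ := 2 / (2 - lam) with hpdef
  set q : ℝ := 2 / lam with hqdef
  have hp1 : 1 < p := by
    rw [hpdef, lt_div_iff₀ h2l]
    linarith
  have hpq : Real.HolderConjugate p q := by
    rw [Real.holderConjugate_iff]
    constructor
    · exact hp1
    · rw [hpdef, hqdef]
      rw [inv_div, inv_div]
      ring
  have hinvp : 1 / p = (2 - lam) / 2 := by rw [hpdef, one_div_div]
  have hinvq : 1 / q = lam / 2 := by rw [hqdef, one_div_div]
  set σ : ℝ := lam / (2 - lam) with hσdef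
  set M : ℝ := maxFn a k with hMdef
  have hM0 : 0 < M := lt_of_lt_of_le
    (lt_of_le_of_ne (ha k) (Ne.symm (Finsupp.mem_support_iff.mp hk))) (apply_le_maxFn a ha k)
  set Tp : ℝ := ∑ i ∈ a.support, a i ^ p with hTpdef
  have hTp0 : 0 < Tp := by
    apply Finset.sum_pos' (fun i _ => Real.rpow_nonneg (ha i) p)
    refine ⟨k, hk, Real.rpow_pos_of_pos ?_ p⟩
    exact lt_of_le_of_ne (ha k) (Ne.symm (Finsupp.mem_support_iff.mp hk))
  set G : ℝ := Tp ^ ((2 - lam) / 2) with hGdef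
  have hG0 : 0 < G := Real.rpow_pos_of_pos hTp0 _
  have hMG : M ≤ G := by
    have := maxFn_le_lp a ha hpq k
    rwa [hinvp, ← hGdef, ← hMdef] at this
  -- choice of scale
  set X : ℝ := (G / M) ^ (2 / (2 - lam)) with hXdef
  have hGM1 : 1 ≤ G / M := (one_le_div hM0).mpr hMG
  have hGM0 : 0 < G / M := by positivity
  have hX1 : 1 ≤ X := by
    rw [hXdef]
    calc (1:ℝ) = (G / M) ^ (0:ℝ) := (Real.rpow_zero _).symm
      _ ≤ (G / M) ^ (2 / (2 - lam)) :=
        Real.rpow_le_rpow_of_exponent_le hGM1 (by positivity)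
  have hX0 : 0 < X := lt_of_lt_of_le one_pos hX1
  obtain ⟨J, hJ1, hJ2⟩ := exists_pow_between hX1
  -- geometric ratios
  set x : ℝ := (2:ℝ) ^ (1 - lam) with hxdef
  set y : ℝ := (2:ℝ) ^ (-(lam / 2)) with hydef
  have hx1 : 1 < x := by
    rw [hxdef]
    exact (Real.one_lt_rpow_iff_of_pos (by norm_num)).mpr (Or.inl ⟨by norm_num, by linarith⟩)
  have hy0 : 0 < y := Real.rpow_pos_of_pos (by norm_num) _
  have hy1 : y < 1 := by
    rw [hydef]
    exact Real.rpow_lt_one_of_one_lt_of_neg (by norm_num) (by linarith)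
  -- annulus decomposition
  set E : Finset ℤ := a.support.erase k with hEdef
  set nj : ℤ → ℕ := fun k2 => Nat.log 2 ((k - k2).natAbs) with hnjdef
  set Jm : ℕ := E.sup nj + 1 with hJmdef
  have hmaps : ∀ k2 ∈ E, nj k2 ∈ Finset.range Jm := by
    intro k2 hk2
    rw [Finset.mem_range, hJmdef]
    exact Nat.lt_succ_of_le (Finset.le_sup hk2)
  have hdecomp : ∑ k2 ∈ E, a k2 / |(k:ℝ) - (k2:ℝ)| ^ lam
      = ∑ j ∈ Finset.range Jm, ∑ k2 ∈ E.filter (fun k2 => nj k2 = j),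
          a k2 / |(k:ℝ) - (k2:ℝ)| ^ lam :=
    (Finset.sum_fiberwise_of_maps_to hmaps _).symm
  -- facts about each annulus
  have habs : ∀ k2 ∈ E, |(k:ℝ) - (k2:ℝ)| = (((k - k2).natAbs : ℕ) : ℝ) := by
    intro k2 _
    have h1 : (k:ℝ) - (k2:ℝ) = ((k - k2 : ℤ) : ℝ) := by push_cast; ring
    rw [h1, Nat.cast_natAbs]
    exact Int.cast_abs.symm
  have hne0 : ∀ k2 ∈ E, (k - k2).natAbs ≠ 0 := by
    intro k2 hk2
    have : k2 ≠ k := Finset.ne_of_mem_erase hk2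
    omega
  -- near bound per annulus
  have hnear : ∀ j, ∑ k2 ∈ E.filter (fun k2 => nj k2 = j), a k2 / |(k:ℝ) - (k2:ℝ)| ^ lam
      ≤ 8 * M * x ^ j := by
    intro j
    set F : Finset ℤ := E.filter (fun k2 => nj k2 = j) with hFdef
    have hD0 : (0:ℝ) < (2:ℝ) ^ j := by positivity
    have hDl0 : (0:ℝ) < ((2:ℝ) ^ j) ^ lam := Real.rpow_pos_of_pos hD0 _
    have hlow : ∀ k2 ∈ F, ((2:ℝ) ^ j) ^ lam ≤ |(k:ℝ) - (k2:ℝ)| ^ lam := by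
      intro k2 hk2
      have hk2E : k2 ∈ E := (Finset.mem_filter.mp hk2).1
      have hjeq : nj k2 = j := (Finset.mem_filter.mp hk2).2
      have h2 : (2:ℕ) ^ j ≤ (k - k2).natAbs := by
        rw [← hjeq]
        exact Nat.pow_log_le_self 2 (hne0 k2 hk2E)
      have h3 : (2:ℝ) ^ j ≤ |(k:ℝ) - (k2:ℝ)| := by
        rw [habs k2 hk2E]
        exact_mod_cast h2
      exact Real.rpow_le_rpow hD0.le h3 h0.le
    have hstep1 : ∑ k2 ∈ F, a k2 / |(k:ℝ) - (k2:ℝ)| ^ lam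
        ≤ (∑ k2 ∈ F, a k2) / ((2:ℝ) ^ j) ^ lam := by
      rw [Finset.sum_div]
      apply Finset.sum_le_sum
      intro k2 hk2
      exact div_le_div_of_nonneg_left (ha k2) hDl0 (hlow k2 hk2)
    have hsub : F ⊆ Finset.Icc (k - ((2 ^ (j+1) : ℕ) : ℤ)) (k + ((2 ^ (j+1) : ℕ) : ℤ)) := by
      intro k2 hk2
      have hk2E : k2 ∈ E := (Finset.mem_filter.mp hk2).1
      have hjeq : nj k2 = j := (Finset.mem_filter.mp hk2).2
      have h2 : (k - k2).natAbs < 2 ^ (j+1) := by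
        rw [← hjeq]
        exact Nat.lt_pow_succ_log_self (by norm_num) _
      rw [Finset.mem_Icc]
      omega
    have hsum2 : ∑ k2 ∈ F, a k2 ≤ winSum a k (2 ^ (j+1)) :=
      Finset.sum_le_sum_of_subset_of_nonneg hsub (fun i _ _ => ha i)
    have hwin : winSum a k (2 ^ (j+1)) ≤ (2 * ((2 ^ (j+1) : ℕ) : ℝ) + 1) * M := by
      have h5 := winAvg_le_maxFn a ha k (2 ^ (j+1))
      rw [winAvg] at h5
      have hposd : (0:ℝ) < 2 * ((2 ^ (j+1) : ℕ) : ℝ) + 1 := by positivity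
      rw [div_le_iff₀ hposd] at h5
      calc winSum a k (2 ^ (j+1)) ≤ M * (2 * ((2 ^ (j+1) : ℕ) : ℝ) + 1) := h5
        _ = (2 * ((2 ^ (j+1) : ℕ) : ℝ) + 1) * M := mul_comm _ _
    have hcount : (2:ℝ) * ((2 ^ (j+1) : ℕ) : ℝ) + 1 ≤ 8 * (2:ℝ) ^ j := by
      have h6 : ((2 ^ (j+1) : ℕ) : ℝ) = 2 * (2:ℝ) ^ j := by
        push_cast
        rw [pow_succ]
        ring
      rw [h6]
      have h7 : (1:ℝ) ≤ (2:ℝ) ^ j := one_le_pow₀ (by norm_num)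
      linarith
    have hmain : ∑ k2 ∈ F, a k2 ≤ 8 * (2:ℝ) ^ j * M := by
      refine hsum2.trans (hwin.trans ?_)
      exact mul_le_mul_of_nonneg_right hcount hM0.le
    calc ∑ k2 ∈ F, a k2 / |(k:ℝ) - (k2:ℝ)| ^ lam
        ≤ (∑ k2 ∈ F, a k2) / ((2:ℝ) ^ j) ^ lam := hstep1
      _ ≤ (8 * (2:ℝ) ^ j * M) / ((2:ℝ) ^ j) ^ lam := by gcongr
      _ = 8 * M * ((2:ℝ) ^ j / ((2:ℝ) ^ j) ^ lam) := by ring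
      _ = 8 * M * ((2:ℝ) ^ j) ^ (1 - lam) := by
          rw [Real.rpow_sub hD0, Real.rpow_one]
      _ = 8 * M * x ^ j := by rw [pow_rpow_comm 2 (by norm_num) (1 - lam) j, hxdef]
  -- far bound per annulus
  have hfar : ∀ j, ∑ k2 ∈ E.filter (fun k2 => nj k2 = j), a k2 / |(k:ℝ) - (k2:ℝ)| ^ lam
      ≤ 8 * G * y ^ j := by
    intro j
    set F : Finset ℤ := E.filter (fun k2 => nj k2 = j) with hFdef
    have hD0 : (0:ℝ) < (2:ℝ) ^ j := by positivity
    have hDl0 : (0:ℝ) < ((2:ℝ) ^ j) ^ lam := Real.rpow_pos_of_pos hD0 _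
    have hlow : ∀ k2 ∈ F, ((2:ℝ) ^ j) ^ lam ≤ |(k:ℝ) - (k2:ℝ)| ^ lam := by
      intro k2 hk2
      have hk2E : k2 ∈ E := (Finset.mem_filter.mp hk2).1
      have hjeq : nj k2 = j := (Finset.mem_filter.mp hk2).2
      have h2 : (2:ℕ) ^ j ≤ (k - k2).natAbs := by
        rw [← hjeq]
        exact Nat.pow_log_le_self 2 (hne0 k2 hk2E)
      have h3 : (2:ℝ) ^ j ≤ |(k:ℝ) - (k2:ℝ)| := by
        rw [habs k2 hk2E]
        exact_mod_cast h2
      exact Real.rpow_le_rpow hD0.le h3 h0.le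
    have hstep1 : ∑ k2 ∈ F, a k2 / |(k:ℝ) - (k2:ℝ)| ^ lam
        ≤ (∑ k2 ∈ F, a k2) / ((2:ℝ) ^ j) ^ lam := by
      rw [Finset.sum_div]
      apply Finset.sum_le_sum
      intro k2 hk2
      exact div_le_div_of_nonneg_left (ha k2) hDl0 (hlow k2 hk2)
    have hsub : F ⊆ Finset.Icc (k - ((2 ^ (j+1) : ℕ) : ℤ)) (k + ((2 ^ (j+1) : ℕ) : ℤ)) := by
      intro k2 hk2
      have hk2E : k2 ∈ E := (Finset.mem_filter.mp hk2).1
      have hjeq : nj k2 = j := (Finset.mem_filter.mp hk2).2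
      have h2 : (k - k2).natAbs < 2 ^ (j+1) := by
        rw [← hjeq]
        exact Nat.lt_pow_succ_log_self (by norm_num) _
      rw [Finset.mem_Icc]
      omega
    have hcardF : (F.card : ℝ) ≤ 8 * (2:ℝ) ^ j := by
      have h7 : F.card ≤ 2 * 2 ^ (j+1) + 1 := by
        calc F.card ≤ (Finset.Icc (k - ((2 ^ (j+1) : ℕ) : ℤ)) (k + ((2 ^ (j+1) : ℕ) : ℤ))).card :=
              Finset.card_le_card hsub
          _ = 2 * 2 ^ (j+1) + 1 := card_window k _
      have h8 : ((2 * 2 ^ (j+1) + 1 : ℕ) : ℝ) ≤ 8 * (2:ℝ) ^ j := by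
        push_cast
        rw [pow_succ]
        have h9 : (1:ℝ) ≤ (2:ℝ) ^ j := one_le_pow₀ (by norm_num)
        linarith
      exact le_trans (by exact_mod_cast Nat.cast_le.mpr h7) h8
    have hsum3 : ∑ k2 ∈ F, a k2 ≤ G * (8 * ((2:ℝ) ^ j) ^ (lam / 2)) := by
      refine le_trans (sum_le_lp_mul_card F a ha hpq) ?_
      have hTple : (∑ i ∈ F, a i ^ p) ^ (1/p) ≤ G := by
        rw [hinvp, hGdef]
        apply Real.rpow_le_rpow (Finset.sum_nonneg fun i _ => Real.rpow_nonneg (ha i) _)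
          (sum_rpow_le a ha (ne_of_gt hpq.pos) F) (by positivity)
      have hcard_rpow : ((F.card : ℝ)) ^ (1/q) ≤ 8 * ((2:ℝ) ^ j) ^ (lam / 2) := by
        calc ((F.card : ℝ)) ^ (1/q) ≤ (8 * (2:ℝ) ^ j) ^ (1/q) :=
              Real.rpow_le_rpow (Nat.cast_nonneg _) hcardF (by rw [hinvq]; positivity)
          _ = (8:ℝ) ^ (1/q) * ((2:ℝ) ^ j) ^ (1/q) := Real.mul_rpow (by norm_num) hD0.le
          _ ≤ 8 * ((2:ℝ) ^ j) ^ (lam / 2) := by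
              rw [hinvq]
              apply mul_le_mul_of_nonneg_right _ (Real.rpow_nonneg hD0.le _)
              calc (8:ℝ) ^ (lam / 2) ≤ (8:ℝ) ^ (1:ℝ) :=
                    Real.rpow_le_rpow_of_exponent_le (by norm_num) (by linarith)
                _ = 8 := Real.rpow_one 8
      exact mul_le_mul hTple hcard_rpow (Real.rpow_nonneg (Nat.cast_nonneg _) _) hG0.le
    calc ∑ k2 ∈ F, a k2 / |(k:ℝ) - (k2:ℝ)| ^ lam
        ≤ (∑ k2 ∈ F, a k2) / ((2:ℝ) ^ j) ^ lam := hstep1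
      _ ≤ (G * (8 * ((2:ℝ) ^ j) ^ (lam / 2))) / ((2:ℝ) ^ j) ^ lam := by gcongr
      _ = 8 * G * (((2:ℝ) ^ j) ^ (lam / 2) / ((2:ℝ) ^ j) ^ lam) := by ring
      _ = 8 * G * ((2:ℝ) ^ j) ^ (-(lam / 2)) := by
          rw [← Real.rpow_sub hD0]
          congr 1
          ring
      _ = 8 * G * y ^ j := by rw [pow_rpow_comm 2 (by norm_num) (-(lam / 2)) j, hydef]
  -- combine
  have hcomb : ∑ k2 ∈ E, a k2 / |(k:ℝ) - (k2:ℝ)| ^ lam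
      ≤ 8 * M * (x ^ J * (x - 1)⁻¹) + 8 * G * (y ^ J * (1 - y)⁻¹) := by
    rw [hdecomp]
    have hterm : ∀ j ∈ Finset.range Jm,
        ∑ k2 ∈ E.filter (fun k2 => nj k2 = j), a k2 / |(k:ℝ) - (k2:ℝ)| ^ lam
        ≤ min (8 * M * x ^ j) (8 * G * y ^ j) :=
      fun j _ => le_min (hnear j) (hfar j)
    refine le_trans (Finset.sum_le_sum hterm) ?_
    refine le_trans (sum_min_split _ _ (fun j => by positivity) (fun j => by positivity) Jm J) ?_
    have hn : ∑ j ∈ Finset.range J, 8 * M * x ^ j ≤ 8 * M * (x ^ J * (x - 1)⁻¹) := by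
      rw [← Finset.mul_sum]
      apply mul_le_mul_of_nonneg_left _ (by positivity)
      rw [geom_sum_eq (ne_of_gt hx1)]
      rw [div_eq_mul_inv]
      apply mul_le_mul_of_nonneg_right _ (by rw [inv_nonneg]; linarith)
      linarith [pow_nonneg (by positivity : (0:ℝ) ≤ x) J]
    have hf : ∑ j ∈ Finset.Ico J Jm, 8 * G * y ^ j ≤ 8 * G * (y ^ J * (1 - y)⁻¹) := by
      rw [← Finset.mul_sum]
      exact mul_le_mul_of_nonneg_left (geom_Ico_le hy0.le hy1 J Jm) (by positivity)
    linarith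
  -- substitute the choice of J
  have hxJ : x ^ J ≤ 2 * X ^ (1 - lam) := by
    have e1 : x ^ J = ((2:ℝ) ^ J) ^ (1 - lam) := (pow_rpow_comm 2 (by norm_num) _ J).symm
    rw [e1]
    calc ((2:ℝ) ^ J) ^ (1 - lam) ≤ (2 * X) ^ (1 - lam) :=
          Real.rpow_le_rpow (by positivity) hJ2 (by linarith)
      _ = (2:ℝ) ^ (1 - lam) * X ^ (1 - lam) := Real.mul_rpow (by norm_num) hX0.le
      _ ≤ 2 * X ^ (1 - lam) := by
          apply mul_le_mul_of_nonneg_right _ (Real.rpow_nonneg hX0.le _)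
          calc (2:ℝ) ^ (1 - lam) ≤ (2:ℝ) ^ (1:ℝ) :=
                Real.rpow_le_rpow_of_exponent_le one_le_two (by linarith)
            _ = 2 := Real.rpow_one 2
  have hyJ : y ^ J ≤ X ^ (-(lam / 2)) := by
    have e1 : y ^ J = ((2:ℝ) ^ J) ^ (-(lam / 2)) := (pow_rpow_comm 2 (by norm_num) _ J).symm
    rw [e1]
    exact Real.rpow_le_rpow_of_nonpos hX0 hJ1 (by linarith)
  -- rpow algebra
  have hXpow : ∀ e : ℝ, X ^ e = (G / M) ^ (2 / (2 - lam) * e) := by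
    intro e
    rw [hXdef, ← Real.rpow_mul hGM0.le]
  have hE1 : 2 / (2 - lam) * (1 - lam) = 1 - σ := by
    rw [hσdef]
    field_simp
    ring
  have hE2 : 2 / (2 - lam) * (-(lam / 2)) = -σ := by
    rw [hσdef]
    field_simp
  have hA : M * X ^ (1 - lam) = M ^ σ * G ^ (1 - σ) := by
    rw [hXpow, hE1, Real.div_rpow hG0.le hM0.le]
    have h4 : M ^ (1:ℝ) / M ^ (1 - σ) = M ^ σ := by
      rw [← Real.rpow_sub hM0]
      norm_num
    calc M * (G ^ (1 - σ) / M ^ (1 - σ)) = (M ^ (1:ℝ) / M ^ (1 - σ)) * G ^ (1 - σ) := by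
          rw [Real.rpow_one]; ring
      _ = M ^ σ * G ^ (1 - σ) := by rw [h4]
  have hB : G * X ^ (-(lam / 2)) = M ^ σ * G ^ (1 - σ) := by
    rw [hXpow, hE2]
    have h5 : (G / M) ^ (-σ) = M ^ σ / G ^ σ := by
      rw [Real.rpow_neg hGM0.le, ← Real.inv_rpow hGM0.le, inv_div,
        Real.div_rpow hM0.le hG0.le]
    have h6 : G ^ (1:ℝ) / G ^ σ = G ^ (1 - σ) := by
      rw [← Real.rpow_sub hG0]
    rw [h5]
    calc G * (M ^ σ / G ^ σ) = M ^ σ * (G ^ (1:ℝ) / G ^ σ) := by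
          rw [Real.rpow_one]; ring
      _ = M ^ σ * G ^ (1 - σ) := by rw [h6]
  -- final assembly
  calc ∑ k2 ∈ E, a k2 / |(k:ℝ) - (k2:ℝ)| ^ lam
      ≤ 8 * M * (x ^ J * (x - 1)⁻¹) + 8 * G * (y ^ J * (1 - y)⁻¹) := hcomb
    _ ≤ 8 * M * ((2 * X ^ (1 - lam)) * (x - 1)⁻¹) + 8 * G * (X ^ (-(lam / 2)) * (1 - y)⁻¹) := by
        have hxinv : (0:ℝ) ≤ (x - 1)⁻¹ := by rw [inv_nonneg]; linarith
        have hyinv : (0:ℝ) ≤ (1 - y)⁻¹ := by rw [inv_nonneg]; linarith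
        gcongr
    _ = 16 * (x - 1)⁻¹ * (M * X ^ (1 - lam)) + 8 * (1 - y)⁻¹ * (G * X ^ (-(lam / 2))) := by
        ring
    _ = 16 * (x - 1)⁻¹ * (M ^ σ * G ^ (1 - σ)) + 8 * (1 - y)⁻¹ * (M ^ σ * G ^ (1 - σ)) := by
        rw [hA, hB]
    _ = (16 * (x - 1)⁻¹ + 8 * (1 - y)⁻¹) * (M ^ σ * G ^ (1 - σ)) := by ring


end HLP

open HLP in
/-- Hardy–Littlewood–Pólya inequality: for `0 < λ < 1`, `p = 2/(2−λ)`, and nonnegative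
finitely supported `(a_k)`, `Σ_{k₁≠k₂} a_{k₁}a_{k₂}/|k₁−k₂|^λ ≤ C(λ)(Σ a_k^p)^{2/p}`. -/
theorem hardy_littlewood_polya (lam : ℝ) (h0 : 0 < lam) (h1 : lam < 1) :
    ∃ C : ℝ, ∀ a : ℤ →₀ ℝ, (∀ k, 0 ≤ a k) →
      (∑ k₁ ∈ a.support, ∑ k₂ ∈ a.support,
          if k₁ ≠ k₂ then a k₁ * a k₂ / |(k₁ : ℝ) - (k₂ : ℝ)| ^ lam else 0) ≤
        C * (∑ k ∈ a.support, (a k) ^ ((2:ℝ)/(2 - lam))) ^ ((2:ℝ)/((2:ℝ)/(2 - lam))) := by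
  classical
  have h2l : (0:ℝ) < 2 - lam := by linarith
  set p : ℝ := 2 / (2 - lam) with hpdef
  set q : ℝ := 2 / lam with hqdef
  have hp1 : 1 < p := by
    rw [hpdef, lt_div_iff₀ h2l]
    linarith
  have hpq : Real.HolderConjugate p q := by
    rw [Real.holderConjugate_iff]
    constructor
    · exact hp1
    · rw [hpdef, hqdef, inv_div, inv_div]
      ring
  have hinvp : 1 / p = (2 - lam) / 2 := by rw [hpdef, one_div_div]
  have hinvq : 1 / q = lam / 2 := by rw [hqdef, one_div_div]
  set σ : ℝ := lam / (2 - lam) with hσdef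
  set C5 : ℝ := 16 * ((2:ℝ) ^ (1 - lam) - 1)⁻¹ + 8 * (1 - (2:ℝ) ^ (-(lam / 2)))⁻¹ with hC5def
  have hx1 : 1 < (2:ℝ) ^ (1 - lam) :=
    (Real.one_lt_rpow_iff_of_pos (by norm_num)).mpr (Or.inl ⟨by norm_num, by linarith⟩)
  have hy1 : (2:ℝ) ^ (-(lam / 2)) < 1 :=
    Real.rpow_lt_one_of_one_lt_of_neg (by norm_num) (by linarith)
  have hy0 : (0:ℝ) < (2:ℝ) ^ (-(lam / 2)) := Real.rpow_pos_of_pos (by norm_num) _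
  have hC50 : 0 ≤ C5 := by
    rw [hC5def]
    have hxi : (0:ℝ) ≤ ((2:ℝ) ^ (1 - lam) - 1)⁻¹ := by
      rw [inv_nonneg]; linarith
    have hyi : (0:ℝ) ≤ (1 - (2:ℝ) ^ (-(lam / 2)))⁻¹ := by
      rw [inv_nonneg]; linarith
    positivity
  have hCM0 : 0 < CM p := CM_pos hp1
  refine ⟨C5 * (CM p) ^ (lam / 2), ?_⟩
  intro a ha
  have hexp2 : (2:ℝ) / p = 2 - lam := by
    rw [hpdef]
    field_simp
  have hLHS : (∑ k₁ ∈ a.support, ∑ k₂ ∈ a.support,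
        if k₁ ≠ k₂ then a k₁ * a k₂ / |(k₁ : ℝ) - (k₂ : ℝ)| ^ lam else 0)
      = ∑ k₁ ∈ a.support, a k₁ *
          ∑ k₂ ∈ a.support.erase k₁, a k₂ / |(k₁ : ℝ) - (k₂ : ℝ)| ^ lam := by
    apply Finset.sum_congr rfl
    intro k1 _
    rw [Finset.mul_sum]
    rw [show ∑ k₂ ∈ a.support, (if k1 ≠ k₂ then a k1 * a k₂ / |(k1 : ℝ) - (k₂ : ℝ)| ^ lam else 0)
        = ∑ k₂ ∈ a.support.filter (fun k₂ => k1 ≠ k₂),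
            a k1 * a k₂ / |(k1 : ℝ) - (k₂ : ℝ)| ^ lam from (Finset.sum_filter _ _).symm]
    rw [Finset.filter_ne]
    exact Finset.sum_congr rfl fun k2 _ => mul_div_assoc _ _ _
  rw [hLHS]
  rcases Finset.eq_empty_or_nonempty a.support with hemp | hne
  · rw [hemp]
    simp only [Finset.sum_empty]
    rw [Real.zero_rpow (by positivity : (2:ℝ)/p ≠ 0), mul_zero]
  · set Tp : ℝ := ∑ i ∈ a.support, a i ^ p with hTpdef
    have hTp0 : 0 < Tp := by
      obtain ⟨k0, hk0⟩ := hne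
      apply Finset.sum_pos' (fun i _ => Real.rpow_nonneg (ha i) p)
      exact ⟨k0, hk0, Real.rpow_pos_of_pos
        (lt_of_le_of_ne (ha k0) (Ne.symm (Finsupp.mem_support_iff.mp hk0))) p⟩
    set G : ℝ := Tp ^ ((2 - lam) / 2) with hGdef
    have hG0 : 0 < G := Real.rpow_pos_of_pos hTp0 _
    -- pointwise Hedberg bound
    have hpoint : ∀ k1 ∈ a.support,
        a k1 * ∑ k₂ ∈ a.support.erase k1, a k₂ / |(k1 : ℝ) - (k₂ : ℝ)| ^ lam
        ≤ a k1 * (C5 * ((maxFn a k1) ^ σ * G ^ (1 - σ))) := by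
      intro k1 hk1
      apply mul_le_mul_of_nonneg_left _ (ha k1)
      have hh := hedberg lam h0 h1 a ha k1 hk1
      rw [← hpdef, ← hTpdef, ← hGdef, ← hσdef, ← hC5def] at hh
      exact hh
    have hsum1 : ∑ k1 ∈ a.support, a k1 *
          ∑ k₂ ∈ a.support.erase k1, a k₂ / |(k1 : ℝ) - (k₂ : ℝ)| ^ lam
        ≤ C5 * G ^ (1 - σ) * ∑ k1 ∈ a.support, a k1 * (maxFn a k1) ^ σ := by
      refine le_trans (Finset.sum_le_sum hpoint) ?_
      rw [Finset.mul_sum]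
      exact le_of_eq (Finset.sum_congr rfl fun k1 _ => by ring)
    -- Hölder
    have hHold : ∑ k1 ∈ a.support, a k1 * (maxFn a k1) ^ σ
        ≤ Tp ^ (1/p) * (∑ k1 ∈ a.support, (maxFn a k1) ^ p) ^ (1/q) := by
      have h := Real.inner_le_Lp_mul_Lq_of_nonneg a.support (f := fun i => a i)
        (g := fun i => (maxFn a i) ^ σ) hpq (fun i _ => ha i)
        (fun i _ => Real.rpow_nonneg (maxFn_nonneg a ha i) _)
      have hMq : ∀ k : ℤ, ((maxFn a k) ^ σ) ^ q = (maxFn a k) ^ p := by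
        intro k
        rw [← Real.rpow_mul (maxFn_nonneg a ha k)]
        congr 1
        rw [hσdef, hqdef, hpdef]
        field_simp
      rw [Finset.sum_congr rfl (fun k _ => hMq k)] at h
      exact h
    have hST : (∑ k1 ∈ a.support, (maxFn a k1) ^ p) ^ (1/q)
        ≤ (CM p) ^ (lam / 2) * Tp ^ (lam / 2) := by
      calc (∑ k1 ∈ a.support, (maxFn a k1) ^ p) ^ (1/q)
          ≤ (CM p * Tp) ^ (1/q) := by
            apply Real.rpow_le_rpow
              (Finset.sum_nonneg fun k _ =>
                Real.rpow_nonneg (maxFn_nonneg a ha k) _)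
              (strong_type a ha hp1) (by rw [hinvq]; positivity)
        _ = (CM p) ^ (1/q) * Tp ^ (1/q) := Real.mul_rpow hCM0.le hTp0.le
        _ = (CM p) ^ (lam / 2) * Tp ^ (lam / 2) := by rw [hinvq]
    -- put everything together
    have hchain : ∑ k1 ∈ a.support, a k1 *
          ∑ k₂ ∈ a.support.erase k1, a k₂ / |(k1 : ℝ) - (k₂ : ℝ)| ^ lam
        ≤ C5 * (CM p) ^ (lam / 2) *
            (G ^ (1 - σ) * (Tp ^ ((2 - lam) / 2) * Tp ^ (lam / 2))) := by
      refine hsum1.trans ?_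
      have h2 : ∑ k1 ∈ a.support, a k1 * (maxFn a k1) ^ σ
          ≤ Tp ^ ((2 - lam) / 2) * ((CM p) ^ (lam / 2) * Tp ^ (lam / 2)) := by
        refine hHold.trans ?_
        rw [hinvp]
        exact mul_le_mul_of_nonneg_left hST (Real.rpow_nonneg hTp0.le _)
      calc C5 * G ^ (1 - σ) * ∑ k1 ∈ a.support, a k1 * (maxFn a k1) ^ σ
          ≤ C5 * G ^ (1 - σ) *
              (Tp ^ ((2 - lam) / 2) * ((CM p) ^ (lam / 2) * Tp ^ (lam / 2))) := by
            apply mul_le_mul_of_nonneg_left h2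
            exact mul_nonneg hC50 (Real.rpow_nonneg hG0.le _)
        _ = C5 * (CM p) ^ (lam / 2) *
              (G ^ (1 - σ) * (Tp ^ ((2 - lam) / 2) * Tp ^ (lam / 2))) := by ring
    refine hchain.trans (le_of_eq ?_)
    congr 1
    have hGpow : G ^ (1 - σ) = Tp ^ ((2 - lam) / 2 * (1 - σ)) := by
      rw [hGdef, ← Real.rpow_mul hTp0.le]
    rw [hGpow, ← Real.rpow_add hTp0, ← Real.rpow_add hTp0]
    congr 1
    rw [hexp2, hσdef]
    field_simp
    ring
end

section
/- Let V ≥ 2, 0 < Δ ≤ V, and let t_1, …, t_n be real numbers. Then (1/Δ)∫_V^{V+Δ} |Σ_{j=1}^n X^{i t_j}|² dX ≤ 4·(V/Δ)·Σ_{j,k=1}^n 1/(1 + |t_j − t_k|). -/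
set_option maxHeartbeats 1000000

open Complex intervalIntegral

private lemma cont_exp_ilog (V Δ u : ℝ) (hV : 2 ≤ V) (hΔ : 0 < Δ) :
    ContinuousOn (fun X : ℝ => Complex.exp (Complex.I * u * Real.log X))
      (Set.uIcc V (V + Δ)) := by
  have hsub : Set.uIcc V (V + Δ) ⊆ {0}ᶜ := by
    intro x hx
    rw [Set.uIcc_of_le (by linarith)] at hx
    have : (2:ℝ) ≤ x := le_trans hV hx.1
    simp only [Set.mem_compl_iff, Set.mem_singleton_iff]
    intro h; rw [h] at this; linarith
  have hlog : ContinuousOn Real.log (Set.uIcc V (V + Δ)) :=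
    Real.continuousOn_log.mono hsub
  exact Complex.continuous_exp.comp_continuousOn
    (continuousOn_const.mul (Complex.continuous_ofReal.comp_continuousOn hlog))

private lemma key_integral_bound (V Δ u : ℝ) (hV : 2 ≤ V) (hΔ : 0 < Δ) (hΔV : Δ ≤ V) :
    ‖∫ X in V..(V + Δ), Complex.exp (Complex.I * u * Real.log X)‖
      ≤ 4 * V / (1 + |u|) := by
  have hV0 : (0:ℝ) < V := by linarith
  have hcont := cont_exp_ilog V Δ u hV hΔ
  have hint : IntervalIntegrable (fun X : ℝ => Complex.exp (Complex.I * u * Real.log X))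
      MeasureTheory.volume V (V + Δ) := hcont.intervalIntegrable
  have habs1 : ∀ X : ℝ, ‖Complex.exp (Complex.I * u * Real.log X)‖ = 1 := by
    intro X
    rw [Complex.norm_exp]
    have : (Complex.I * u * Real.log X).re = 0 := by simp [Complex.mul_re]
    rw [this, Real.exp_zero]
  -- trivial bound
  have hbound1 : ‖∫ X in V..(V + Δ), Complex.exp (Complex.I * u * Real.log X)‖ ≤ Δ := by
    have := intervalIntegral.norm_integral_le_of_norm_le_const (C := 1)
      (f := fun X : ℝ => Complex.exp (Complex.I * u * Real.log X))
      (a := V) (b := V + Δ)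
      (by intro x _; rw [habs1])
    calc ‖_‖ ≤ 1 * |V + Δ - V| := this
      _ = Δ := by rw [one_mul]; rw [add_sub_cancel_left, abs_of_pos hΔ]
  rcases le_or_gt |u| 3 with hu | hu
  · -- small u : use trivial bound
    have h1u : (0:ℝ) < 1 + |u| := by positivity
    calc ‖_‖ ≤ Δ := hbound1
      _ ≤ V := hΔV
      _ ≤ 4 * V / (1 + |u|) := by
          rw [le_div_iff₀ h1u]; nlinarith [abs_nonneg u]
  · -- large u : FTC bound
    have hu0 : (0:ℝ) < |u| := by linarith
    set c : ℂ := 1 + Complex.I * u with hc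
    have hcne : c ≠ 0 := by
      intro h
      have : c.re = 0 := by rw [h]; simp
      simp [hc, Complex.add_re, Complex.mul_re] at this
    have hcabs : |u| ≤ ‖c‖ := by
      have := Complex.abs_im_le_norm c
      have him : c.im = u := by simp [hc]
      rw [him] at this
      exact this.trans (le_refl _)
    set F : ℝ → ℂ := fun X => Complex.exp (c * Real.log X) / c with hF
    have hderiv : ∀ x ∈ Set.uIcc V (V + Δ),
        HasDerivAt F (Complex.exp (Complex.I * u * Real.log x)) x := by
      intro x hx
      rw [Set.uIcc_of_le (by linarith)] at hx
      have hx0 : (0:ℝ) < x := by linarith [hx.1]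
      have h1 : HasDerivAt Real.log x⁻¹ x := Real.hasDerivAt_log (ne_of_gt hx0)
      have h2 : HasDerivAt (fun X : ℝ => ((Real.log X : ℝ) : ℂ)) (x⁻¹ : ℝ) x :=
        h1.ofReal_comp
      have h3 : HasDerivAt (fun X : ℝ => c * (Real.log X : ℂ)) (c * (x⁻¹ : ℝ)) x :=
        h2.const_mul c
      have h4 := h3.cexp
      have h5 := h4.div_const c
      refine h5.congr_deriv ?_
      have hexp : Complex.exp (c * Real.log x) = x * Complex.exp (Complex.I * u * Real.log x) := by
        rw [hc]
        rw [add_mul, one_mul, Complex.exp_add]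
        congr 1
        rw [← Complex.ofReal_exp, Real.exp_log hx0]
      have hxx : ((x:ℝ):ℂ) * ((x⁻¹:ℝ):ℂ) = 1 := by
        rw [← Complex.ofReal_mul, mul_inv_cancel₀ (ne_of_gt hx0), Complex.ofReal_one]
      rw [mul_div_assoc, mul_div_cancel_left₀ _ hcne, hexp,
        mul_comm ((x:ℂ)) (Complex.exp (Complex.I * u * Real.log x)),
        mul_assoc (Complex.exp (Complex.I * u * Real.log x)), hxx, mul_one]
    have hFTC : (∫ X in V..(V + Δ), Complex.exp (Complex.I * u * Real.log X))
        = F (V + Δ) - F V :=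
      intervalIntegral.integral_eq_sub_of_hasDerivAt hderiv hint
    have hFabs : ∀ x : ℝ, 0 < x → ‖F x‖ = x / ‖c‖ := by
      intro x hx0
      rw [hF]
      simp only [norm_div]
      congr 1
      rw [Complex.norm_exp]
      have : (c * (Real.log x : ℂ)).re = Real.log x := by
        simp [hc, Complex.mul_re, Complex.add_re, Complex.mul_im]
      rw [this, Real.exp_log hx0]
    rw [hFTC]
    have h1 : ‖F (V + Δ) - F V‖ ≤ ‖F (V + Δ)‖ + ‖F V‖ :=
      norm_sub_le _ _
    rw [hFabs (V + Δ) (by linarith), hFabs V hV0] at h1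
    have hcpos : (0:ℝ) < ‖c‖ := lt_of_lt_of_le hu0 hcabs
    have h2 : (V + Δ) / ‖c‖ + V / ‖c‖ ≤ 3 * V / |u| := by
      rw [← add_div, div_le_div_iff₀ hcpos hu0]
      have : (V + Δ + V) * |u| ≤ 3 * V * |u| := by nlinarith
      calc (V + Δ + V) * |u| ≤ 3 * V * |u| := this
        _ ≤ 3 * V * ‖c‖ := by nlinarith
    have h3 : 3 * V / |u| ≤ 4 * V / (1 + |u|) := by
      rw [div_le_div_iff₀ hu0 (by positivity)]
      nlinarith
    linarith

/-- Second moment of a finite exponential sum over a short interval: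
`(1/Δ)∫_V^{V+Δ}|Σ_j X^{it_j}|² dX ≤ 4(V/Δ)Σ_{j,k} 1/(1+|t_j−t_k|)`. -/
theorem second_moment_exponential_sum (V Δ : ℝ) (hV : 2 ≤ V) (hΔ : 0 < Δ) (hΔV : Δ ≤ V)
    (n : ℕ) (t : Fin n → ℝ) :
    (1/Δ) * ∫ X in V..(V + Δ),
        ‖∑ j, Complex.exp (Complex.I * t j * Real.log X)‖ ^ 2 ≤
      4 * (V/Δ) * ∑ j, ∑ k, 1 / (1 + |t j - t k|) := by
  have hV0 : (0:ℝ) < V := by linarith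
  -- pointwise identity
  have hpt : ∀ X : ℝ,
      (‖∑ j, Complex.exp (Complex.I * t j * Real.log X)‖ ^ 2 : ℝ)
        = (∑ j, ∑ k, Complex.exp (Complex.I * (t j - t k) * Real.log X)).re := by
    intro X
    set L := Real.log X
    have key : ∀ a b : ℝ,
        Complex.exp (Complex.I * a * L) * (starRingEnd ℂ) (Complex.exp (Complex.I * b * L))
          = Complex.exp (Complex.I * (a - b) * L) := by
      intro a b
      rw [← Complex.exp_conj, ← Complex.exp_add]
      congr 1
      simp only [map_mul, Complex.conj_I, Complex.conj_ofReal]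
      -- push_cast not needed
      ring
    have h1 : ((∑ j, Complex.exp (Complex.I * t j * L))
          * (starRingEnd ℂ) (∑ k, Complex.exp (Complex.I * t k * L))).re
        = (∑ j, ∑ k, Complex.exp (Complex.I * (t j - t k) * L)).re := by
      rw [map_sum, Finset.sum_mul_sum]
      congr 1
      refine Finset.sum_congr rfl fun j _ => Finset.sum_congr rfl fun k _ => key _ _
    rw [← h1, Complex.mul_conj]
    simp [Complex.sq_norm]
  have hcont : ∀ (u : ℝ), IntervalIntegrable
      (fun X : ℝ => Complex.exp (Complex.I * u * Real.log X))
      MeasureTheory.volume V (V + Δ) :=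
    fun u => (cont_exp_ilog V Δ u hV hΔ).intervalIntegrable
  have hinner : ∀ j : Fin n, IntervalIntegrable
      (fun X : ℝ => ∑ k, Complex.exp (Complex.I * (t j - t k) * Real.log X))
      MeasureTheory.volume V (V + Δ) := by
    intro j
    apply ContinuousOn.intervalIntegrable
    refine continuousOn_finset_sum _ fun k _ => ?_
    have := cont_exp_ilog V Δ (t j - t k) hV hΔ
    simpa only [Complex.ofReal_sub] using this
  have hsumint : IntervalIntegrable
      (fun X : ℝ => ∑ j, ∑ k, Complex.exp (Complex.I * (t j - t k) * Real.log X))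
      MeasureTheory.volume V (V + Δ) := by
    apply ContinuousOn.intervalIntegrable
    refine continuousOn_finset_sum _ fun j _ =>
      continuousOn_finset_sum _ fun k _ => ?_
    have := cont_exp_ilog V Δ (t j - t k) hV hΔ
    simpa only [Complex.ofReal_sub] using this
  have hstep : (∫ X in V..(V + Δ),
      ‖∑ j, Complex.exp (Complex.I * t j * Real.log X)‖ ^ 2)
      = (∑ j, ∑ k, ∫ X in V..(V + Δ),
          Complex.exp (Complex.I * (t j - t k) * Real.log X)).re := by
    have : (∫ X in V..(V + Δ),
        ‖∑ j, Complex.exp (Complex.I * t j * Real.log X)‖ ^ 2)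
        = ∫ X in V..(V + Δ),
          Complex.reCLM (∑ j, ∑ k, Complex.exp (Complex.I * (t j - t k) * Real.log X)) := by
      refine intervalIntegral.integral_congr fun X _ => ?_
      simpa using hpt X
    have hswap : (∫ X in V..(V + Δ),
          ∑ j, ∑ k, Complex.exp (Complex.I * (t j - t k) * Real.log X))
        = ∑ j, ∑ k, ∫ X in V..(V + Δ),
            Complex.exp (Complex.I * (t j - t k) * Real.log X) := by
      rw [intervalIntegral.integral_finset_sum (fun j _ => hinner j)]
      exact Finset.sum_congr rfl fun j _ =>
        intervalIntegral.integral_finset_sum fun k _ => by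
          simpa only [Complex.ofReal_sub] using hcont (t j - t k)
    rw [this, ContinuousLinearMap.intervalIntegral_comp_comm _ hsumint, hswap]
    rfl
  rw [hstep]
  have hbound : (∑ j, ∑ k, ∫ X in V..(V + Δ),
        Complex.exp (Complex.I * (t j - t k) * Real.log X)).re
      ≤ ∑ j, ∑ k, 4 * V / (1 + |t j - t k|) := by
    rw [Complex.re_sum]
    apply Finset.sum_le_sum
    intro j _
    rw [Complex.re_sum]
    apply Finset.sum_le_sum
    intro k _
    calc (∫ X in V..(V + Δ), Complex.exp (Complex.I * (t j - t k) * Real.log X)).re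
        ≤ ‖∫ X in V..(V + Δ), Complex.exp (Complex.I * (t j - t k) * Real.log X)‖ :=
          Complex.re_le_norm _
      _ ≤ 4 * V / (1 + |t j - t k|) := by
          have := key_integral_bound V Δ (t j - t k) hV hΔ hΔV
          simpa only [Complex.ofReal_sub] using this
  have hΔinv : (0:ℝ) ≤ 1/Δ := by positivity
  calc (1/Δ) * (∑ j, ∑ k, ∫ X in V..(V + Δ),
        Complex.exp (Complex.I * (t j - t k) * Real.log X)).re
      ≤ (1/Δ) * ∑ j, ∑ k, 4 * V / (1 + |t j - t k|) := by
        exact mul_le_mul_of_nonneg_left hbound hΔinv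
    _ = 4 * (V/Δ) * ∑ j, ∑ k, 1 / (1 + |t j - t k|) := by
        rw [Finset.mul_sum, Finset.mul_sum]
        refine Finset.sum_congr rfl fun j _ => ?_
        rw [Finset.mul_sum, Finset.mul_sum]
        refine Finset.sum_congr rfl fun k _ => ?_
        field_simp
end

section
/- For all complex z with Re(z) ≥ 0 and |z| ≥ 1, the integral K₀(z) = ∫_0^∞ e^{−z cosh u} du converges and satisfies |K₀(z)| ≤ 2·|z|^{−1/2}·e^{−Re(z)}. -/
open MeasureTheory Filter Set intervalIntegral
open scoped Real Topology

noncomputable section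

namespace K0aux

/-- The decreasing weight `2/√(2+w²)`. -/
def gg (w : ℝ) : ℝ := 2 / Real.sqrt (2 + w ^ 2)

/-- Its derivative. -/
def gg' (w : ℝ) : ℝ := -(2 * w) / ((2 + w ^ 2) * Real.sqrt (2 + w ^ 2))

/-- The primitive `∫_0^w e^{-z(1+s²)} ds`. -/
def psi (z : ℂ) (w : ℝ) : ℂ := ∫ s in (0:ℝ)..w, Complex.exp (-z * (1 + (s:ℂ) ^ 2))

lemma sq2pos (w : ℝ) : 0 < Real.sqrt (2 + w ^ 2) := by
  apply Real.sqrt_pos.2; positivity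

lemma base_pos (w : ℝ) : (0:ℝ) < 2 + w ^ 2 := by positivity

lemma sqrt_sq2 (w : ℝ) : Real.sqrt (2 + w ^ 2) ^ 2 = 2 + w ^ 2 :=
  Real.sq_sqrt (base_pos w).le

lemma hasDerivAt_sqrt2 (w : ℝ) :
    HasDerivAt (fun w : ℝ => Real.sqrt (2 + w ^ 2)) (w / Real.sqrt (2 + w ^ 2)) w := by
  have h1 : HasDerivAt (fun w : ℝ => 2 + w ^ 2) (2 * w) w := by
    simpa using ((hasDerivAt_pow 2 w).const_add 2)
  have h2 := (Real.hasDerivAt_sqrt (base_pos w).ne').comp w h1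
  refine h2.congr_deriv (Eq.symm ?_)
  field_simp

lemma hasDerivAt_gg (w : ℝ) : HasDerivAt gg (gg' w) w := by
  have h := (hasDerivAt_const w (2:ℝ)).div (hasDerivAt_sqrt2 w) (sq2pos w).ne'
  refine h.congr_deriv (Eq.symm ?_)
  unfold gg'
  rw [div_eq_div_iff (by positivity) (by positivity)]
  have h2 := sqrt_sq2 w
  field_simp
  rw [h2]; ring

lemma gg_cont : Continuous gg := by
  unfold gg; fun_prop (disch := intro x; positivity)

lemma gg'_cont : Continuous gg' := by
  unfold gg'
  fun_prop (disch := intro x; positivity)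

lemma gauss_cont (z : ℂ) : Continuous fun s : ℝ => Complex.exp (-z * (1 + (s:ℂ) ^ 2)) := by
  fun_prop

lemma psi_cont (z : ℂ) : Continuous (psi z) := by
  unfold psi
  exact intervalIntegral.continuous_primitive
    (fun a b => ((gauss_cont z)).intervalIntegrable a b) 0

lemma psi_hasDeriv (z : ℂ) (w : ℝ) :
    HasDerivAt (psi z) (Complex.exp (-z * (1 + (w:ℂ) ^ 2))) w := by
  apply intervalIntegral.integral_hasDerivAt_right
    ((gauss_cont z).intervalIntegrable 0 w)
    ((gauss_cont z).stronglyMeasurableAtFilter _ _)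
    (gauss_cont z).continuousAt

lemma re_neg_mul_ofReal (z : ℂ) (a : ℝ) : (-z * (a:ℂ)).re = -z.re * a := by simp

lemma norm_gauss (z : ℂ) (s : ℝ) :
    ‖Complex.exp (-z * (1 + (s:ℂ) ^ 2))‖ = Real.exp (-z.re * (1 + s ^ 2)) := by
  rw [show -z * (1 + (s:ℂ) ^ 2) = -z * ((1 + s ^ 2 : ℝ) : ℂ) by push_cast; ring,
    Complex.norm_exp, re_neg_mul_ofReal]

lemma norm_gauss2 (z : ℂ) (s : ℝ) :
    ‖Complex.exp (-z * (s:ℂ) ^ 2)‖ = Real.exp (-z.re * s ^ 2) := by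
  rw [show -z * ((s:ℂ)) ^ 2 = -z * ((s ^ 2 : ℝ) : ℂ) by push_cast; ring,
    Complex.norm_exp, re_neg_mul_ofReal]

lemma psi_le (z : ℂ) (hx : 0 ≤ z.re) {w : ℝ} (hw : 0 ≤ w) :
    ‖psi z w‖ ≤ Real.exp (-z.re) * w := by
  unfold psi
  have h := intervalIntegral.norm_integral_le_of_norm_le_const
    (C := Real.exp (-z.re)) (f := fun s : ℝ => Complex.exp (-z * (1 + (s:ℂ) ^ 2)))
    (a := 0) (b := w) ?_
  · simpa [abs_of_nonneg hw] using h
  · intro s _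
    rw [norm_gauss]
    apply Real.exp_le_exp.2
    nlinarith [sq_nonneg s]

lemma inv_sq_deriv {x : ℝ} (hx : x ≠ 0) : HasDerivAt (fun w : ℝ => -w⁻¹) ((x ^ 2)⁻¹) x := by
  have h := (hasDerivAt_inv hx).neg
  refine h.congr_deriv (Eq.symm ?_)
  ring

lemma tendsto_neg_inv : Tendsto (fun w : ℝ => -w⁻¹) atTop (𝓝 0) := by
  rw [show (0:ℝ) = -0 by norm_num]
  exact (tendsto_inv_atTop_zero).neg

lemma inv_sq_int {S : ℝ} (hS : 0 < S) : IntegrableOn (fun w : ℝ => (w ^ 2)⁻¹) (Ioi S) := by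
  apply integrableOn_Ioi_deriv_of_nonneg'
    (fun x hx => inv_sq_deriv (ne_of_gt (lt_of_lt_of_le hS hx))) _ tendsto_neg_inv
  intro x hx
  have : (0:ℝ) < x := lt_trans hS hx
  positivity

lemma inv_sq_eval {S : ℝ} (hS : 0 < S) : ∫ w in Ioi S, (w ^ 2)⁻¹ = S⁻¹ := by
  have h := integral_Ioi_of_hasDerivAt_of_tendsto'
    (fun x hx => inv_sq_deriv (ne_of_gt (lt_of_lt_of_le hS hx))) (inv_sq_int hS) tendsto_neg_inv
  simpa using h

lemma gauss_hasDeriv (ζ : ℂ) (w : ℝ) :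
    HasDerivAt (fun w : ℝ => Complex.exp (-ζ * (w:ℂ) ^ 2))
      (-ζ * (2 * (w:ℂ)) * Complex.exp (-ζ * (w:ℂ) ^ 2)) w := by
  have h1 : HasDerivAt (fun u : ℂ => Complex.exp (-ζ * u ^ 2))
      (Complex.exp (-ζ * ((w:ℂ)) ^ 2) * (-ζ * (2 * ((w:ℂ)) ^ 1))) ((w:ℂ)) :=
    ((hasDerivAt_pow 2 ((w:ℂ))).const_mul (-ζ)).cexp
  have h2 := h1.comp_ofReal
  convert h2 using 1
  ring

lemma tailfn_hasDeriv (ζ : ℂ) (hζ0 : ζ ≠ 0) {w : ℝ} (hw : w ≠ 0) :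
    HasDerivAt (fun w : ℝ => -Complex.exp (-ζ * (w:ℂ) ^ 2) / (2 * ζ * (w:ℂ)))
      (Complex.exp (-ζ * (w:ℂ) ^ 2) + Complex.exp (-ζ * (w:ℂ) ^ 2) / (2 * ζ * (w:ℂ) ^ 2)) w := by
  have hnum := (gauss_hasDeriv ζ w).neg
  have hden : HasDerivAt (fun w : ℝ => 2 * ζ * ((w:ℝ):ℂ)) (2 * ζ) w := by
    simpa using (((hasDerivAt_id w).ofReal_comp).const_mul (2 * ζ))
  have hwc : ((w:ℝ):ℂ) ≠ 0 := Complex.ofReal_ne_zero.2 hw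
  have hne : 2 * ζ * ((w:ℝ):ℂ) ≠ 0 := by
    exact mul_ne_zero (mul_ne_zero two_ne_zero hζ0) hwc
  have h := hnum.div hden hne
  refine h.congr_deriv (Eq.symm ?_)
  field_simp
  simp only [Pi.neg_apply]; ring

lemma norm_den (ζ : ℂ) (w : ℝ) : ‖2 * ζ * ((w:ℝ):ℂ)‖ = 2 * ‖ζ‖ * |w| := by
  simp [abs_of_nonneg]

lemma norm_den2 (ζ : ℂ) (w : ℝ) :
    ‖2 * ζ * ((w:ℝ):ℂ) ^ 2‖ = 2 * ‖ζ‖ * w ^ 2 := by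
  rw [norm_mul, norm_mul, norm_pow]
  simp [Complex.norm_real, abs_of_nonneg, sq_abs]

lemma exp_re_le_one (ζ : ℂ) (hζ : 0 ≤ ζ.re) (w : ℝ) : Real.exp (-ζ.re * w ^ 2) ≤ 1 := by
  rw [Real.exp_le_one_iff]
  nlinarith [sq_nonneg w]

lemma gauss_tail (ζ : ℂ) (hζ : 0 < ζ.re) {S : ℝ} (hS : 0 < S) :
    ‖∫ w in Ioi S, Complex.exp (-ζ * (w:ℂ) ^ 2)‖ ≤ 1 / (‖ζ‖ * S) := by
  have hζ0 : ζ ≠ 0 := fun h => by simp [h] at hζ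
  have hr0 : 0 < ‖ζ‖ := norm_pos_iff.mpr hζ0
  have hint1 : IntegrableOn (fun w : ℝ => Complex.exp (-ζ * (w:ℂ) ^ 2)) (Ioi S) :=
    (integrable_cexp_neg_mul_sq hζ).integrableOn
  have hbd : ∀ w : ℝ, 0 < w →
      ‖Complex.exp (-ζ * (w:ℂ) ^ 2) / (2 * ζ * ((w:ℝ):ℂ) ^ 2)‖ ≤
        (2 * ‖ζ‖)⁻¹ * (w ^ 2)⁻¹ := by
    intro w hw
    rw [norm_div, norm_gauss2, norm_den2]
    rw [div_le_iff₀ (by positivity)]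
    have h1 := exp_re_le_one ζ hζ.le w
    have h2 : (2 * ‖ζ‖)⁻¹ * (w ^ 2)⁻¹ * (2 * ‖ζ‖ * w ^ 2) = 1 := by
      field_simp
    rw [h2]
    exact h1
  have hint2 : IntegrableOn
      (fun w : ℝ => Complex.exp (-ζ * (w:ℂ) ^ 2) / (2 * ζ * ((w:ℝ):ℂ) ^ 2)) (Ioi S) := by
    apply Integrable.mono' (g := fun w : ℝ => (2 * ‖ζ‖)⁻¹ * (w ^ 2)⁻¹)
    · exact (inv_sq_int hS).const_mul _
    · apply ContinuousOn.aestronglyMeasurable _ measurableSet_Ioi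
      apply ContinuousOn.div (Continuous.continuousOn (by fun_prop))
        (Continuous.continuousOn (by fun_prop))
      intro x hx
      have hx0 : (0:ℝ) < x := lt_trans hS hx
      exact mul_ne_zero (mul_ne_zero two_ne_zero hζ0)
        (pow_ne_zero 2 (Complex.ofReal_ne_zero.2 hx0.ne'))
    · filter_upwards [ae_restrict_mem measurableSet_Ioi] with w hw
      exact hbd w (lt_trans hS hw)
  have hd : ∀ x ∈ Ici S, HasDerivAt (fun w : ℝ => -Complex.exp (-ζ * (w:ℂ) ^ 2) / (2 * ζ * (w:ℂ)))
      (Complex.exp (-ζ * (x:ℂ) ^ 2) + Complex.exp (-ζ * (x:ℂ) ^ 2) / (2 * ζ * (x:ℂ) ^ 2)) x :=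
    fun x hx => tailfn_hasDeriv ζ hζ0 (ne_of_gt (lt_of_lt_of_le hS hx))
  have hg := (tendsto_inv_atTop_zero (𝕜 := ℝ)).const_mul ((2 * ‖ζ‖)⁻¹)
  rw [mul_zero] at hg
  have hlim : Tendsto (fun w : ℝ => -Complex.exp (-ζ * (w:ℂ) ^ 2) / (2 * ζ * (w:ℂ)))
      atTop (𝓝 0) := by
    refine squeeze_zero_norm' ?_ hg
    filter_upwards [eventually_gt_atTop (0:ℝ)] with w hw
    rw [norm_div, norm_neg, norm_gauss2, norm_den, abs_of_pos hw]
    rw [div_le_iff₀ (by positivity)]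
    have h1 := exp_re_le_one ζ hζ.le w
    have h2 : (2 * ‖ζ‖)⁻¹ * w⁻¹ * (2 * ‖ζ‖ * w) = 1 := by
      field_simp
    rw [h2]
    exact h1
  have heval := integral_Ioi_of_hasDerivAt_of_tendsto' hd (hint1.add hint2) hlim
  rw [integral_add hint1 hint2] at heval
  have hsplit : ∫ w in Ioi S, Complex.exp (-ζ * (w:ℂ) ^ 2) =
      Complex.exp (-ζ * (S:ℂ) ^ 2) / (2 * ζ * (S:ℂ)) -
        ∫ w in Ioi S, Complex.exp (-ζ * (w:ℂ) ^ 2) / (2 * ζ * ((w:ℝ):ℂ) ^ 2) := by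
    rw [eq_sub_iff_add_eq, heval]
    ring
  rw [hsplit]
  have hb1 : ‖Complex.exp (-ζ * (S:ℂ) ^ 2) / (2 * ζ * (S:ℂ))‖ ≤ 1 / (2 * ‖ζ‖ * S) := by
    rw [norm_div, norm_gauss2, norm_den, abs_of_pos hS, div_le_div_iff₀ (by positivity) (by positivity)]
    have h1 := exp_re_le_one ζ hζ.le S
    nlinarith [mul_le_mul_of_nonneg_right h1
      (show (0:ℝ) ≤ 2 * ‖ζ‖ * S by positivity)]
  have hb2 : ‖∫ w in Ioi S, Complex.exp (-ζ * (w:ℂ) ^ 2) / (2 * ζ * ((w:ℝ):ℂ) ^ 2)‖ ≤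
      1 / (2 * ‖ζ‖ * S) := by
    have h := norm_integral_le_of_norm_le ((inv_sq_int hS).const_mul (2 * ‖ζ‖)⁻¹)
      (by filter_upwards [ae_restrict_mem measurableSet_Ioi] with w hw
          exact hbd w (lt_trans hS hw))
    rw [MeasureTheory.integral_const_mul, inv_sq_eval hS] at h
    calc ‖∫ w in Ioi S, Complex.exp (-ζ * (w:ℂ) ^ 2) / (2 * ζ * ((w:ℝ):ℂ) ^ 2)‖ ≤
        (2 * ‖ζ‖)⁻¹ * S⁻¹ := h
      _ = 1 / (2 * ‖ζ‖ * S) := by field_simp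
  calc ‖_ - _‖ ≤ _ := norm_sub_le _ _
    _ ≤ 1 / (2 * ‖ζ‖ * S) + 1 / (2 * ‖ζ‖ * S) := add_le_add hb1 hb2
    _ = 1 / (‖ζ‖ * S) := by field_simp; ring

lemma gauss0_bound (ζ : ℂ) (hζ : 0 < ζ.re) {S : ℝ} (hS : 0 < S) :
    ‖∫ w in (0:ℝ)..S, Complex.exp (-ζ * (w:ℂ) ^ 2)‖ ≤
      Real.sqrt π / (2 * Real.sqrt (‖ζ‖)) + 1 / (‖ζ‖ * S) := by
  have hζ0 : ζ ≠ 0 := fun h => by simp [h] at hζ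
  have hr0 : 0 < ‖ζ‖ := norm_pos_iff.mpr hζ0
  have hint : Integrable (fun w : ℝ => Complex.exp (-ζ * (w:ℂ) ^ 2)) :=
    integrable_cexp_neg_mul_sq hζ
  have hfull := integral_gaussian_complex_Ioi hζ
  have hsplit : (∫ w in Ioi (0:ℝ), Complex.exp (-ζ * (w:ℂ) ^ 2)) =
      (∫ w in Ioc (0:ℝ) S, Complex.exp (-ζ * (w:ℂ) ^ 2)) +
        ∫ w in Ioi S, Complex.exp (-ζ * (w:ℂ) ^ 2) := by
    rw [← Set.Ioc_union_Ioi_eq_Ioi hS.le,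
      setIntegral_union (Set.Ioc_disjoint_Ioi le_rfl) measurableSet_Ioi
        hint.integrableOn hint.integrableOn]
  have hiv : ∫ w in (0:ℝ)..S, Complex.exp (-ζ * (w:ℂ) ^ 2) =
      ∫ w in Ioc (0:ℝ) S, Complex.exp (-ζ * (w:ℂ) ^ 2) :=
    intervalIntegral.integral_of_le hS.le
  have hnorm : ‖(↑π / ζ) ^ (1/2 : ℂ) / 2‖ = Real.sqrt π / (2 * Real.sqrt (‖ζ‖)) := by
    rw [norm_div, show (1/2 : ℂ) = ((1/2 : ℝ) : ℂ) by norm_num, 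
      Complex.norm_cpow_real, norm_div, Complex.norm_of_nonneg Real.pi_pos.le,
      Real.div_rpow Real.pi_pos.le (norm_nonneg ζ), ← Real.sqrt_eq_rpow,
      ← Real.sqrt_eq_rpow]
    simp
    ring
  have heq : ∫ w in (0:ℝ)..S, Complex.exp (-ζ * (w:ℂ) ^ 2) =
      (↑π / ζ) ^ (1/2 : ℂ) / 2 - ∫ w in Ioi S, Complex.exp (-ζ * (w:ℂ) ^ 2) := by
    rw [hiv, eq_sub_iff_add_eq, ← hsplit, hfull]
  rw [heq]
  calc ‖_ - _‖ ≤ _ := norm_sub_le _ _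
    _ ≤ Real.sqrt π / (2 * Real.sqrt (‖ζ‖)) + 1 / (‖ζ‖ * S) := by
        rw [hnorm]
        exact add_le_add le_rfl (gauss_tail ζ hζ hS)

lemma gauss2_cont (z : ℂ) : Continuous fun s : ℝ => Complex.exp (-z * (s:ℂ) ^ 2) := by
  fun_prop

lemma gauss0_bound' (z : ℂ) (hx : 0 ≤ z.re) (hz : 1 ≤ ‖z‖) {S : ℝ} (hS : 0 < S) :
    ‖∫ w in (0:ℝ)..S, Complex.exp (-z * (w:ℂ) ^ 2)‖ ≤
      Real.sqrt π / (2 * Real.sqrt ‖z‖) + 1 / (‖z‖ * S) := by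
  have hr0 : (0:ℝ) < ‖z‖ := lt_of_lt_of_le one_pos hz
  by_contra hcon
  push_neg at hcon
  set D := ‖∫ w in (0:ℝ)..S, Complex.exp (-z * (w:ℂ) ^ 2)‖ -
    (Real.sqrt π / (2 * Real.sqrt ‖z‖) + 1 / (‖z‖ * S)) with hD
  have hDpos : 0 < D := by rw [hD]; linarith
  set ε : ℝ := D / (2 * S ^ 3) with hε
  have hεpos : 0 < ε := by positivity
  set ζ := z + (ε : ℂ) with hζdef
  have hζre : 0 < ζ.re := by
    rw [hζdef]
    simp only [Complex.add_re, Complex.ofReal_re]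
    linarith
  have hrle : ‖z‖ ≤ ‖ζ‖ := by
    have h1 : ‖z‖ ^ 2 ≤ ‖ζ‖ ^ 2 := by
      rw [Complex.sq_norm, Complex.sq_norm, hζdef, Complex.normSq_apply, Complex.normSq_apply]
      simp only [Complex.add_re, Complex.add_im, Complex.ofReal_re, Complex.ofReal_im, add_zero]
      nlinarith
    nlinarith [norm_nonneg ζ, norm_nonneg z]
  have hb := gauss0_bound ζ hζre hS
  have hdiff : ‖(∫ w in (0:ℝ)..S, Complex.exp (-z * (w:ℂ) ^ 2)) -
      ∫ w in (0:ℝ)..S, Complex.exp (-ζ * (w:ℂ) ^ 2)‖ ≤ ε * S ^ 2 * S := by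
    rw [← intervalIntegral.integral_sub ((gauss2_cont z).intervalIntegrable 0 S)
      ((gauss2_cont ζ).intervalIntegrable 0 S)]
    have h := intervalIntegral.norm_integral_le_of_norm_le_const (C := ε * S ^ 2)
      (f := fun u : ℝ => Complex.exp (-z * (u:ℂ) ^ 2) - Complex.exp (-ζ * (u:ℂ) ^ 2))
      (a := 0) (b := S) ?_
    · simpa [abs_of_nonneg hS.le] using h
    · intro u hu
      have hu' : u ∈ Ioc (0:ℝ) S := by rwa [Set.uIoc_of_le hS.le] at hu
      have h1 : -ζ * (u:ℂ) ^ 2 = -z * (u:ℂ) ^ 2 + -(ε:ℂ) * (u:ℂ) ^ 2 := by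
        rw [hζdef]; ring
      show ‖Complex.exp (-z * (u:ℂ) ^ 2) - Complex.exp (-ζ * (u:ℂ) ^ 2)‖ ≤ ε * S ^ 2
      rw [show Complex.exp (-z * (u:ℂ) ^ 2) - Complex.exp (-ζ * (u:ℂ) ^ 2) =
        Complex.exp (-z * (u:ℂ) ^ 2) * (1 - Complex.exp (-(ε:ℂ) * (u:ℂ) ^ 2)) by
          rw [h1, Complex.exp_add]; ring]
      rw [norm_mul, norm_gauss2]
      have h2 : Complex.exp (-(ε:ℂ) * (u:ℂ) ^ 2) = ((Real.exp (-(ε * u ^ 2)) : ℝ) : ℂ) := by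
        rw [Complex.ofReal_exp]; congr 1; push_cast; ring
      rw [h2, show (1:ℂ) - ((Real.exp (-(ε * u ^ 2)) : ℝ) : ℂ) =
        (((1 - Real.exp (-(ε * u ^ 2)) : ℝ)) : ℂ) by push_cast; ring, Complex.norm_real,
        Real.norm_eq_abs]
      have hea : 0 ≤ ε * u ^ 2 := by positivity
      have h3 : |1 - Real.exp (-(ε * u ^ 2))| ≤ ε * u ^ 2 := by
        rw [abs_of_nonneg (by nlinarith [Real.exp_le_one_iff.2 (by linarith : -(ε * u ^ 2) ≤ 0)])]
        nlinarith [Real.add_one_le_exp (-(ε * u ^ 2))]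
      have h4 : Real.exp (-z.re * u ^ 2) ≤ 1 := exp_re_le_one z hx u
      have h5 : ε * u ^ 2 ≤ ε * S ^ 2 := by
        nlinarith [mul_nonneg hεpos.le (mul_nonneg (sub_nonneg.2 hu'.2)
          (by linarith [hu'.1] : (0:ℝ) ≤ S + u))]
      nlinarith [mul_le_mul_of_nonneg_right h4 (abs_nonneg (1 - Real.exp (-(ε * u ^ 2)))),
        Real.exp_pos (-z.re * u ^ 2), abs_nonneg (1 - Real.exp (-(ε * u ^ 2)))]
  have htri : ‖∫ w in (0:ℝ)..S, Complex.exp (-z * (w:ℂ) ^ 2)‖ ≤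
      ‖∫ w in (0:ℝ)..S, Complex.exp (-ζ * (w:ℂ) ^ 2)‖ +
      ‖(∫ w in (0:ℝ)..S, Complex.exp (-z * (w:ℂ) ^ 2)) -
        ∫ w in (0:ℝ)..S, Complex.exp (-ζ * (w:ℂ) ^ 2)‖ := by
    exact norm_le_insert' _ _
  have hmono : Real.sqrt π / (2 * Real.sqrt (‖ζ‖)) + 1 / (‖ζ‖ * S) ≤
      Real.sqrt π / (2 * Real.sqrt ‖z‖) + 1 / (‖z‖ * S) := by
    have hsr : 0 < Real.sqrt ‖z‖ := Real.sqrt_pos.2 hr0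
    gcongr
    all_goals first
      | exact Real.sqrt_le_sqrt hrle
      | exact hrle
      | positivity
  have hfin : ‖∫ w in (0:ℝ)..S, Complex.exp (-z * (w:ℂ) ^ 2)‖ ≤
      (Real.sqrt π / (2 * Real.sqrt ‖z‖) + 1 / (‖z‖ * S)) + ε * S ^ 2 * S :=
    le_trans htri (add_le_add (le_trans hb hmono) hdiff)
  have hhalf : ε * S ^ 2 * S = D / 2 := by rw [hε]; field_simp
  rw [hhalf] at hfin
  linarith

lemma psi_eq (z : ℂ) (w : ℝ) :
    psi z w = Complex.exp (-z) * ∫ s in (0:ℝ)..w, Complex.exp (-z * (s:ℂ) ^ 2) := by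
  rw [← intervalIntegral.integral_const_mul]
  unfold psi
  congr 1
  funext s
  rw [← Complex.exp_add]
  ring_nf

lemma psi_le2 (z : ℂ) (hx : 0 ≤ z.re) (hz : 1 ≤ ‖z‖) {w : ℝ} (hw : 0 < w) :
    ‖psi z w‖ ≤ Real.exp (-z.re) *
      (Real.sqrt π / (2 * Real.sqrt ‖z‖) + 1 / (‖z‖ * w)) := by
  rw [psi_eq, norm_mul, Complex.norm_exp]
  have : (-z).re = -z.re := by simp
  rw [this]
  exact mul_le_mul_of_nonneg_left (gauss0_bound' z hx hz hw) (Real.exp_pos _).le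

lemma exp_negre_le_one (z : ℂ) (hx : 0 ≤ z.re) : Real.exp (-z.re) ≤ 1 := by
  rw [Real.exp_le_one_iff]; linarith

lemma sqrt_pi_le_two : Real.sqrt π ≤ 2 := by
  rw [show (2:ℝ) = Real.sqrt 4 by rw [show (4:ℝ) = 2^2 by norm_num, Real.sqrt_sq]; norm_num]
  exact Real.sqrt_le_sqrt (by nlinarith [Real.pi_lt_d2])

lemma psi_glob (z : ℂ) (hx : 0 ≤ z.re) (hz : 1 ≤ ‖z‖) {w : ℝ} (hw : 0 ≤ w) :
    ‖psi z w‖ ≤ 3 := by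
  have he := exp_negre_le_one z hx
  have he0 := Real.exp_pos (-z.re)
  rcases le_or_gt w 1 with h | h
  · have h1 := psi_le z hx hw
    nlinarith
  · have h1 := psi_le2 z hx hz (lt_trans one_pos h)
    have hr1 : (1:ℝ) ≤ Real.sqrt ‖z‖ := by
      rw [show (1:ℝ) = Real.sqrt 1 by simp]
      exact Real.sqrt_le_sqrt hz
    have hsp := sqrt_pi_le_two
    have hsq0 : (0:ℝ) < Real.sqrt π := Real.sqrt_pos.2 Real.pi_pos
    have h2 : Real.sqrt π / (2 * Real.sqrt ‖z‖) ≤ 1 := by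
      rw [div_le_one (by positivity)]
      nlinarith
    have h3 : 1 / (‖z‖ * w) ≤ 1 := by
      rw [div_le_one (by nlinarith)]
      nlinarith
    have h4 : Real.sqrt π / (2 * Real.sqrt ‖z‖) + 1 / (‖z‖ * w) ≤ 2 := by
      linarith
    calc ‖psi z w‖ ≤ Real.exp (-z.re) * (Real.sqrt π / (2 * Real.sqrt ‖z‖)
          + 1 / (‖z‖ * w)) := h1
      _ ≤ 1 * 2 := by
          apply mul_le_mul he h4 (by positivity) (by norm_num)
      _ ≤ 3 := by norm_num

lemma sqrt2_le {w : ℝ} (hw : 0 ≤ w) : w ≤ Real.sqrt (2 + w ^ 2) := by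
  have h := Real.sqrt_le_sqrt (show w ^ 2 ≤ 2 + w ^ 2 by linarith)
  rwa [Real.sqrt_sq hw] at h

lemma gg'_bound {w : ℝ} (hw : 0 < w) : |gg' w| ≤ 2 / (1 + w ^ 2) := by
  have h1 : |gg' w| = 2 * w / ((2 + w ^ 2) * Real.sqrt (2 + w ^ 2)) := by
    unfold gg'
    rw [abs_div, abs_neg, abs_of_nonneg (by positivity), abs_of_nonneg (by positivity)]
  rw [h1, div_le_div_iff₀ (by positivity) (by positivity)]
  have hws := sqrt2_le hw.le
  nlinarith [sq2pos w, sq_nonneg w]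

lemma integrable_g'psi (z : ℂ) (hx : 0 ≤ z.re) (hz : 1 ≤ ‖z‖) :
    IntegrableOn (fun w : ℝ => (gg' w : ℂ) * psi z w) (Ioi 0) := by
  apply Integrable.mono' (g := fun w : ℝ => 3 * (2 / (1 + w ^ 2)))
  · exact ((integrable_inv_one_add_sq.const_mul 2).const_mul 3).integrableOn
  · exact ((Complex.continuous_ofReal.comp gg'_cont).mul (psi_cont z)).aestronglyMeasurable.restrict
  · filter_upwards [ae_restrict_mem measurableSet_Ioi] with w hw
    have hw0 : (0:ℝ) < w := hw
    rw [norm_mul, Complex.norm_real]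
    calc ‖gg' w‖ * ‖psi z w‖ ≤ (2 / (1 + w ^ 2)) * 3 := by
          apply mul_le_mul (gg'_bound hw0) (psi_glob z hx hz hw0.le) (norm_nonneg _)
            (by positivity)
      _ = 3 * (2 / (1 + w ^ 2)) := by ring

lemma ibp (z : ℂ) (W : ℝ) :
    ∫ w in (0:ℝ)..W, (gg w : ℂ) * Complex.exp (-z * (1 + (w:ℂ) ^ 2)) =
      (gg W : ℂ) * psi z W - ∫ w in (0:ℝ)..W, (gg' w : ℂ) * psi z w := by
  have hu : ∀ x ∈ uIcc (0:ℝ) W, HasDerivAt (fun w : ℝ => ((gg w : ℂ)))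
      ((gg' x : ℂ)) x := fun x _ => (hasDerivAt_gg x).ofReal_comp
  have hv : ∀ x ∈ uIcc (0:ℝ) W, HasDerivAt (psi z)
      (Complex.exp (-z * (1 + (x:ℂ) ^ 2))) x := fun x _ => psi_hasDeriv z x
  have hu' : IntervalIntegrable (fun w : ℝ => ((gg' w : ℂ))) volume 0 W :=
    (Complex.continuous_ofReal.comp gg'_cont).intervalIntegrable _ _
  have hv' : IntervalIntegrable (fun w : ℝ => Complex.exp (-z * (1 + (w:ℂ) ^ 2))) volume 0 W :=
    (gauss_cont z).intervalIntegrable _ _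
  have h := intervalIntegral.integral_mul_deriv_eq_deriv_mul hu hv hu' hv'
  have h0 : psi z 0 = 0 := intervalIntegral.integral_same
  rw [h0] at h
  simpa using h

lemma cosh_key (u : ℝ) : Real.cosh u = 1 + (Real.sqrt 2 * Real.sinh (u/2)) ^ 2 := by
  rw [mul_pow, Real.sq_sqrt (by norm_num : (0:ℝ) ≤ 2)]
  have h1 := Real.cosh_two_mul (u/2)
  rw [show 2 * (u/2) = u by ring] at h1
  have h2 := Real.cosh_sq (u/2)
  nlinarith

lemma gg_sinh (u : ℝ) : gg (Real.sqrt 2 * Real.sinh (u/2)) =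
    2 / (Real.sqrt 2 * Real.cosh (u/2)) := by
  unfold gg
  congr 1
  rw [mul_pow, Real.sq_sqrt (by norm_num : (0:ℝ) ≤ 2)]
  have h2 := Real.cosh_sq (u/2)
  rw [show 2 + 2 * Real.sinh (u/2) ^ 2 = 2 * Real.cosh (u/2) ^ 2 by nlinarith,
    Real.sqrt_mul (by norm_num : (0:ℝ) ≤ 2), Real.sqrt_sq (Real.cosh_pos (u/2)).le]

lemma subst (z : ℂ) (R : ℝ) :
    ∫ u in (0:ℝ)..R, Complex.exp (-z * (Real.cosh u : ℂ)) =
      ∫ w in (0:ℝ)..(Real.sqrt 2 * Real.sinh (R/2)),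
        (gg w : ℂ) * Complex.exp (-z * (1 + (w:ℂ) ^ 2)) := by
  have hd : ∀ x ∈ uIcc (0:ℝ) R, HasDerivAt (fun u : ℝ => Real.sqrt 2 * Real.sinh (u/2))
      (Real.sqrt 2 * (Real.cosh (x/2) * (1/2))) x := by
    intro x _
    have h1 : HasDerivAt (fun u : ℝ => u / 2) (1/2) x := (hasDerivAt_id x).div_const 2
    exact ((Real.hasDerivAt_sinh (x/2)).comp x h1).const_mul (Real.sqrt 2)
  have hc : ContinuousOn (fun x : ℝ => Real.sqrt 2 * (Real.cosh (x/2) * (1/2)))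
      (uIcc (0:ℝ) R) := by fun_prop
  have hgc : Continuous (fun w : ℝ => (gg w : ℂ) * Complex.exp (-z * (1 + (w:ℂ) ^ 2))) :=
    (Complex.continuous_ofReal.comp gg_cont).mul (gauss_cont z)
  have h := intervalIntegral.integral_comp_smul_deriv hd hc hgc
  rw [show Real.sqrt 2 * Real.sinh (0/2) = 0 by simp] at h
  rw [← h]
  apply intervalIntegral.integral_congr
  intro u _
  refine Eq.symm ?_
  show (Real.sqrt 2 * (Real.cosh (u/2) * (1/2))) •
      ((gg (Real.sqrt 2 * Real.sinh (u/2)) : ℂ) *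
        Complex.exp (-z * (1 + ((Real.sqrt 2 * Real.sinh (u/2) : ℝ) : ℂ) ^ 2))) =
    Complex.exp (-z * (Real.cosh u : ℂ))
  have hexp : (1 + ((Real.sqrt 2 * Real.sinh (u/2) : ℝ) : ℂ) ^ 2) = ((Real.cosh u : ℝ) : ℂ) := by
    rw [cosh_key u]; push_cast; ring
  rw [hexp, gg_sinh]
  have hch := Real.cosh_pos (u/2)
  have hs2 : (0:ℝ) < Real.sqrt 2 := Real.sqrt_pos.2 (by norm_num)
  rw [Complex.real_smul,
    show ((Real.sqrt 2 * (Real.cosh (u/2) * (1/2)) : ℝ) : ℂ) *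
        (((2 / (Real.sqrt 2 * Real.cosh (u/2)) : ℝ) : ℂ) *
          Complex.exp (-z * (Real.cosh u : ℂ))) =
      ((Real.sqrt 2 * (Real.cosh (u/2) * (1/2)) *
          (2 / (Real.sqrt 2 * Real.cosh (u/2))) : ℝ) : ℂ) *
        Complex.exp (-z * (Real.cosh u : ℂ)) by push_cast; ring,
    show Real.sqrt 2 * (Real.cosh (u/2) * (1/2)) * (2 / (Real.sqrt 2 * Real.cosh (u/2)))
      = 1 by field_simp]
  simp

lemma tendsto_W : Tendsto (fun R : ℝ => Real.sqrt 2 * Real.sinh (R/2)) atTop atTop := by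
  have h2 : Tendsto (fun R : ℝ => R / 2) atTop atTop :=
    tendsto_id.atTop_div_const (by norm_num)
  apply tendsto_atTop_mono' atTop _ h2
  filter_upwards [eventually_ge_atTop (0:ℝ)] with R hR
  have h1 : R / 2 ≤ Real.sinh (R / 2) := Real.self_le_sinh_iff.2 (by linarith)
  have h3 : 0 ≤ Real.sinh (R / 2) := le_trans (by linarith) h1
  have h4 : (1:ℝ) ≤ Real.sqrt 2 := by
    rw [show (1:ℝ) = Real.sqrt 1 by simp]
    exact Real.sqrt_le_sqrt (by norm_num)
  nlinarith

lemma neg_gg_deriv : ∀ x : ℝ, HasDerivAt (fun w => -gg w)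
    (2 * x / ((2 + x ^ 2) * Real.sqrt (2 + x ^ 2))) x := by
  intro x
  have h := (hasDerivAt_gg x).neg
  refine h.congr_deriv (Eq.symm ?_)
  unfold gg'
  ring

lemma tendsto_neg_gg : Tendsto (fun w : ℝ => -gg w) atTop (𝓝 0) := by
  rw [show (0:ℝ) = -0 by norm_num]
  apply Tendsto.neg
  refine squeeze_zero_norm' ?_ (by simpa using (tendsto_inv_atTop_zero (𝕜 := ℝ)).const_mul 2)
  · filter_upwards [eventually_gt_atTop (0:ℝ)] with w hw
    unfold gg
    rw [Real.norm_eq_abs, abs_of_nonneg (by positivity)]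
    rw [mul_comm 2 w⁻¹, div_le_iff₀ (sq2pos w)]
    have h1 := sqrt2_le hw.le
    have h2 : w⁻¹ * w = 1 := inv_mul_cancel₀ hw.ne'
    nlinarith [mul_nonneg (inv_pos.2 hw).le (sub_nonneg.2 h1)]

lemma tail_p_int {a : ℝ} (ha : 0 < a) :
    IntegrableOn (fun w => 2 * w / ((2 + w ^ 2) * Real.sqrt (2 + w ^ 2))) (Ioi a) := by
  apply integrableOn_Ioi_deriv_of_nonneg' (fun x _ => neg_gg_deriv x) _ tendsto_neg_gg
  intro x hx
  have : (0:ℝ) < x := lt_trans ha hx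
  positivity

lemma tail_p_eval {a : ℝ} (ha : 0 < a) :
    ∫ w in Ioi a, 2 * w / ((2 + w ^ 2) * Real.sqrt (2 + w ^ 2)) = 2 / Real.sqrt (2 + a ^ 2) := by
  have h := integral_Ioi_of_hasDerivAt_of_tendsto' (fun x _ => neg_gg_deriv x)
    (tail_p_int ha) tendsto_neg_gg
  rw [h]
  unfold gg
  ring

lemma QQ_deriv : ∀ x : ℝ, HasDerivAt (fun w : ℝ => w / Real.sqrt (2 + w ^ 2))
    (2 / ((2 + x ^ 2) * Real.sqrt (2 + x ^ 2))) x := by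
  intro x
  have h := (hasDerivAt_id x).div (hasDerivAt_sqrt2 x) (sq2pos x).ne'
  refine h.congr_deriv (Eq.symm ?_)
  rw [div_eq_div_iff (by positivity) (by positivity)]
  have h2 := sqrt_sq2 x
  field_simp
  simp only [id_eq, h2]; ring

lemma tendsto_QQ : Tendsto (fun w : ℝ => w / Real.sqrt (2 + w ^ 2)) atTop (𝓝 1) := by
  have h1 : Tendsto (fun w : ℝ => Real.sqrt (1 - 2 / (2 + w ^ 2))) atTop (𝓝 1) := by
    have h2 : Tendsto (fun w : ℝ => 2 + w ^ 2) atTop atTop := by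
      apply tendsto_atTop_add_const_left
      exact tendsto_pow_atTop (by norm_num)
    have h3 : Tendsto (fun w : ℝ => 2 / (2 + w ^ 2)) atTop (𝓝 0) := by
      simpa [div_eq_mul_inv] using (h2.inv_tendsto_atTop).const_mul (2:ℝ)
    have h4 : Tendsto (fun w : ℝ => 1 - 2 / (2 + w ^ 2)) atTop (𝓝 1) := by
      simpa using (tendsto_const_nhds (x := (1:ℝ)) (f := atTop)).sub h3
    have h5 := (Real.continuous_sqrt.tendsto 1).comp h4
    simpa [Function.comp_def] using h5
  apply h1.congr'
  filter_upwards [eventually_gt_atTop (0:ℝ)] with w hw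
  have hb := base_pos w
  have : 1 - 2 / (2 + w ^ 2) = w ^ 2 / (2 + w ^ 2) := by field_simp; ring
  rw [this, Real.sqrt_div (sq_nonneg w), Real.sqrt_sq hw.le]

lemma tail_q_int {a : ℝ} (ha : 0 < a) :
    IntegrableOn (fun w => 2 / ((2 + w ^ 2) * Real.sqrt (2 + w ^ 2))) (Ioi a) := by
  apply integrableOn_Ioi_deriv_of_nonneg' (fun x _ => QQ_deriv x) _ tendsto_QQ
  intro x hx
  positivity

lemma tail_q_eval {a : ℝ} (ha : 0 < a) :
    ∫ w in Ioi a, 2 / ((2 + w ^ 2) * Real.sqrt (2 + w ^ 2)) = 1 - a / Real.sqrt (2 + a ^ 2) := by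
  exact integral_Ioi_of_hasDerivAt_of_tendsto' (fun x _ => QQ_deriv x)
    (tail_q_int ha) tendsto_QQ

lemma num_final {s v c : ℝ} (hs0 : 0 < s) (hs1 : s ≤ 1) (hv2 : v ^ 2 = 1 + s ^ 2)
    (hv1 : 1 ≤ v) (hc1 : 1.25 ≤ c) (hc2 : c ≤ 1.2534) :
    (2/3) * s ^ 3 + c * s / v + s ^ 2 - s ^ 3 / v ≤ 2 * s := by
  have hv0 : (0:ℝ) < v := lt_of_lt_of_le one_pos hv1
  have hvle : v ≤ 2 := by nlinarith
  have hcs : (0:ℝ) ≤ c - s ^ 2 := by nlinarith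
  have hA : 1 + 3 * s ^ 2 / 8 ≤ v := by
    have h1 : (1 + 3 * s ^ 2 / 8) ^ 2 ≤ v ^ 2 := by rw [hv2]; nlinarith [sq_nonneg s]
    calc 1 + 3 * s ^ 2 / 8 = Real.sqrt ((1 + 3 * s ^ 2 / 8) ^ 2) :=
          (Real.sqrt_sq (by positivity)).symm
      _ ≤ Real.sqrt (v ^ 2) := Real.sqrt_le_sqrt h1
      _ = v := Real.sqrt_sq hv0.le
  have key1 : (c - s ^ 2) / v ≤ (c - s ^ 2) * (3 - v) / 2 := by
    rw [div_le_div_iff₀ hv0 (by norm_num)]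
    have h0 : (0:ℝ) ≤ (c - s ^ 2) * ((v - 1) * (2 - v)) :=
      mul_nonneg hcs (mul_nonneg (by linarith) (by linarith))
    nlinarith
  have expand : (2/3) * s ^ 3 + c * s / v + s ^ 2 - s ^ 3 / v
      = (2/3) * s ^ 3 + s ^ 2 + s * ((c - s ^ 2) / v) := by field_simp; ring
  rw [expand]
  have key2 : s * ((c - s ^ 2) / v) ≤ s * ((c - s ^ 2) * (3 - v) / 2) :=
    mul_le_mul_of_nonneg_left key1 hs0.le
  have key3 : (c - s ^ 2) * (3 - v) ≤ (c - s ^ 2) * (2 - 3 * s ^ 2 / 8) :=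
    mul_le_mul_of_nonneg_left (by linarith) hcs
  have hs2 : s ^ 2 ≤ 1 := by nlinarith
  have key5 : s ^ 4 ≤ s ^ 2 := by
    calc s ^ 4 = s ^ 2 * s ^ 2 := by ring
      _ ≤ 1 * s ^ 2 := mul_le_mul_of_nonneg_right hs2 (sq_nonneg s)
      _ = s ^ 2 := by ring
  nlinarith [sq_nonneg (s - 1.315), mul_le_mul_of_nonneg_left key3 hs0.le, key2]

end K0aux

end

set_option maxHeartbeats 1000000 in
/-- For `Re z ≥ 0` and `|z| ≥ 1`, the (improper) integral
`K₀(z) = ∫_0^∞ e^{−z cosh u} du` converges and `|K₀(z)| ≤ 2|z|^{−1/2} e^{−Re z}`. -/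
theorem K0_decay_bound (z : ℂ) (hre : 0 ≤ z.re) (hz : 1 ≤ ‖z‖) :
    ∃ L : ℂ,
      Filter.Tendsto (fun R : ℝ => ∫ u in (0:ℝ)..R, Complex.exp (-z * Real.cosh u))
        Filter.atTop (nhds L) ∧
      ‖L‖ ≤ 2 * ‖z‖ ^ (-(1:ℝ)/2) * Real.exp (-z.re) := by
  open K0aux in
  have hr0 : (0:ℝ) < ‖z‖ := lt_of_lt_of_le one_pos hz
  set L0 : ℂ := ∫ w in Ioi (0:ℝ), (K0aux.gg' w : ℂ) * K0aux.psi z w with hL0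
  refine ⟨-L0, ?_, ?_⟩
  · -- convergence
    have h1 : Tendsto (fun W : ℝ => (K0aux.gg W : ℂ) * K0aux.psi z W) atTop (𝓝 0) := by
      have hg := (tendsto_inv_atTop_zero (𝕜 := ℝ)).const_mul ((2:ℝ) * 3)
      rw [mul_zero] at hg
      refine squeeze_zero_norm' ?_ hg
      filter_upwards [eventually_gt_atTop (0:ℝ)] with W hW
      rw [norm_mul, Complex.norm_real]
      have hb1 : ‖K0aux.gg W‖ ≤ 2 * W⁻¹ := by
        rw [Real.norm_eq_abs, abs_of_nonneg (by unfold K0aux.gg; positivity)]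
        unfold K0aux.gg
        rw [mul_comm 2 W⁻¹, div_le_iff₀ (K0aux.sq2pos W)]
        have h1 := K0aux.sqrt2_le hW.le
        have h2 : W⁻¹ * W = 1 := inv_mul_cancel₀ hW.ne'
        nlinarith [mul_nonneg (inv_pos.2 hW).le (sub_nonneg.2 h1)]
      have hb2 := K0aux.psi_glob z hre hz hW.le
      calc ‖K0aux.gg W‖ * ‖K0aux.psi z W‖ ≤ (2 * W⁻¹) * 3 :=
            mul_le_mul hb1 hb2 (norm_nonneg _) (by positivity)
        _ = 2 * 3 * W⁻¹ := by ring
    have h2 : Tendsto (fun W : ℝ => ∫ w in (0:ℝ)..W, (K0aux.gg' w : ℂ) * K0aux.psi z w)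
        atTop (𝓝 L0) :=
      intervalIntegral_tendsto_integral_Ioi 0 (K0aux.integrable_g'psi z hre hz) tendsto_id
    have h3 : Tendsto (fun W : ℝ => ∫ w in (0:ℝ)..W,
        (K0aux.gg w : ℂ) * Complex.exp (-z * (1 + (w:ℂ) ^ 2))) atTop (𝓝 (0 - L0)) := by
      apply (h1.sub h2).congr
      intro W
      exact (K0aux.ibp z W).symm
    have h4 := h3.comp K0aux.tendsto_W
    have h5 : (fun R : ℝ => ∫ u in (0:ℝ)..R, Complex.exp (-z * Real.cosh u)) =
        (fun W : ℝ => ∫ w in (0:ℝ)..W, (K0aux.gg w : ℂ) * Complex.exp (-z * (1 + (w:ℂ) ^ 2))) ∘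
          (fun R => Real.sqrt 2 * Real.sinh (R/2)) := by
      funext R
      exact K0aux.subst z R
    rw [h5, show -L0 = 0 - L0 by ring]
    exact h4
  · -- the bound
    have hnormL : ‖-L0‖ = ‖L0‖ := by
      rw [norm_neg]
    rw [hnormL]
    set r := ‖z‖ with hrdef
    set s := Real.sqrt r⁻¹ with hs
    set w0 := Real.sqrt (2 * r⁻¹) with hw0
    set v := Real.sqrt (1 + r⁻¹) with hv
    have hw0pos : 0 < w0 := Real.sqrt_pos.2 (by positivity)
    have hs0 : 0 < s := Real.sqrt_pos.2 (by positivity)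
    have hvpos : 0 < v := Real.sqrt_pos.2 (by positivity)
    have hs1 : s ≤ 1 := by
      rw [hs, show (1:ℝ) = Real.sqrt 1 by simp]
      exact Real.sqrt_le_sqrt (by rw [inv_le_one_iff₀]; right; exact hz)
    have hsq : s ^ 2 = r⁻¹ := Real.sq_sqrt (by positivity)
    have hw0sq : w0 ^ 2 = 2 * r⁻¹ := Real.sq_sqrt (by positivity)
    have hw0s : w0 = Real.sqrt 2 * s := by
      rw [hw0, hs, Real.sqrt_mul (by norm_num : (0:ℝ) ≤ 2)]
    have h2w0 : Real.sqrt (2 + w0 ^ 2) = Real.sqrt 2 * v := by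
      rw [hw0sq, show 2 + 2 * r⁻¹ = 2 * (1 + r⁻¹) by ring,
        Real.sqrt_mul (by norm_num : (0:ℝ) ≤ 2), hv]
    have hv2 : v ^ 2 = 1 + s ^ 2 := by
      rw [hv, Real.sq_sqrt (by positivity), hsq]
    have hv1 : 1 ≤ v := by
      have h := Real.sqrt_le_sqrt
        (show (1:ℝ) ≤ 1 + r⁻¹ from le_add_of_nonneg_right (by positivity))
      rwa [Real.sqrt_one] at h
    have hsr : Real.sqrt r = s⁻¹ := by
      rw [hs, Real.sqrt_inv, inv_inv]
    have hIbase := K0aux.integrable_g'psi z hre hz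
    have hNbase : IntegrableOn (fun w : ℝ => ‖(K0aux.gg' w : ℂ) * K0aux.psi z w‖) (Ioi 0) :=
      hIbase.norm
    have hn1 : ‖L0‖ ≤ ∫ w in Ioi (0:ℝ), ‖(K0aux.gg' w : ℂ) * K0aux.psi z w‖ :=
      norm_integral_le_integral_norm _
    have hsub1 : Ioc (0:ℝ) w0 ⊆ Ioi 0 := Set.Ioc_subset_Ioi_self
    have hsp : (∫ w in Ioi (0:ℝ), ‖(K0aux.gg' w : ℂ) * K0aux.psi z w‖) =
        (∫ w in Ioc (0:ℝ) w0, ‖(K0aux.gg' w : ℂ) * K0aux.psi z w‖) +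
          ∫ w in Ioi w0, ‖(K0aux.gg' w : ℂ) * K0aux.psi z w‖ := by
      rw [← Set.Ioc_union_Ioi_eq_Ioi hw0pos.le,
        setIntegral_union (Set.Ioc_disjoint_Ioi le_rfl) measurableSet_Ioi
          (hNbase.mono_set hsub1) (hNbase.mono_set (Set.Ioi_subset_Ioi hw0pos.le))]
    -- piece 1
    have hp1 : (∫ w in Ioc (0:ℝ) w0, ‖(K0aux.gg' w : ℂ) * K0aux.psi z w‖) ≤
        Real.exp (-z.re) / Real.sqrt 2 * (w0 ^ 3 / 3) := by
      have hRHSint : IntegrableOn (fun w : ℝ => Real.exp (-z.re) / Real.sqrt 2 * w ^ 2)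
          (Ioc 0 w0) := (Continuous.integrableOn_Ioc (by fun_prop))
      have hmono := setIntegral_mono_on (hNbase.mono_set hsub1) hRHSint
        measurableSet_Ioc ?_
      · calc (∫ w in Ioc (0:ℝ) w0, ‖(K0aux.gg' w : ℂ) * K0aux.psi z w‖) ≤
            ∫ w in Ioc (0:ℝ) w0, Real.exp (-z.re) / Real.sqrt 2 * w ^ 2 := hmono
          _ = Real.exp (-z.re) / Real.sqrt 2 * (w0 ^ 3 / 3) := by
              rw [← intervalIntegral.integral_of_le hw0pos.le,
                intervalIntegral.integral_const_mul, integral_pow]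
              norm_num
      · intro w hw
        have hwpos : (0:ℝ) < w := hw.1
        rw [norm_mul, Complex.norm_real, Real.norm_eq_abs]
        have hb1 : |K0aux.gg' w| ≤ w / Real.sqrt 2 := by
          have h1 : |K0aux.gg' w| = 2 * w / ((2 + w ^ 2) * Real.sqrt (2 + w ^ 2)) := by
            unfold K0aux.gg'
            rw [abs_div, abs_neg, abs_of_nonneg (by positivity),
              abs_of_nonneg (by positivity)]
          rw [h1, div_le_div_iff₀ (by positivity) (Real.sqrt_pos.2 (by norm_num))]
          have h2 : 2 * Real.sqrt 2 ≤ (2 + w ^ 2) * Real.sqrt (2 + w ^ 2) := by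
            apply mul_le_mul (by nlinarith [sq_nonneg w])
              (Real.sqrt_le_sqrt (by nlinarith [sq_nonneg w]))
              (Real.sqrt_nonneg 2) (by positivity)
          nlinarith [hwpos, Real.sqrt_nonneg 2]
        have hb2 := K0aux.psi_le z hre hwpos.le
        calc |K0aux.gg' w| * ‖K0aux.psi z w‖ ≤ (w / Real.sqrt 2) * (Real.exp (-z.re) * w) := by
              apply mul_le_mul hb1 hb2 (norm_nonneg _) (by positivity)
          _ = Real.exp (-z.re) / Real.sqrt 2 * w ^ 2 := by ring
    -- piece 2
    have hp2 : (∫ w in Ioi w0, ‖(K0aux.gg' w : ℂ) * K0aux.psi z w‖) ≤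
        Real.exp (-z.re) * (Real.sqrt π / (2 * Real.sqrt r)) * (2 / Real.sqrt (2 + w0 ^ 2)) +
        Real.exp (-z.re) * r⁻¹ * (1 - w0 / Real.sqrt (2 + w0 ^ 2)) := by
      set C1 := Real.exp (-z.re) * (Real.sqrt π / (2 * Real.sqrt r)) with hC1
      set C2 := Real.exp (-z.re) * r⁻¹ with hC2
      have hintp := K0aux.tail_p_int hw0pos
      have hintq := K0aux.tail_q_int hw0pos
      have hRHSint : IntegrableOn (fun w : ℝ =>
          C1 * (2 * w / ((2 + w ^ 2) * Real.sqrt (2 + w ^ 2))) +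
          C2 * (2 / ((2 + w ^ 2) * Real.sqrt (2 + w ^ 2)))) (Ioi w0) :=
        (hintp.const_mul C1).add (hintq.const_mul C2)
      have hmono := setIntegral_mono_on (hNbase.mono_set (Set.Ioi_subset_Ioi hw0pos.le))
        hRHSint measurableSet_Ioi ?_
      · calc (∫ w in Ioi w0, ‖(K0aux.gg' w : ℂ) * K0aux.psi z w‖) ≤
            ∫ w in Ioi w0, (C1 * (2 * w / ((2 + w ^ 2) * Real.sqrt (2 + w ^ 2))) +
              C2 * (2 / ((2 + w ^ 2) * Real.sqrt (2 + w ^ 2)))) := hmono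
          _ = C1 * (2 / Real.sqrt (2 + w0 ^ 2)) + C2 * (1 - w0 / Real.sqrt (2 + w0 ^ 2)) := by
              rw [integral_add (hintp.const_mul C1) (hintq.const_mul C2),
                MeasureTheory.integral_const_mul, MeasureTheory.integral_const_mul,
                K0aux.tail_p_eval hw0pos, K0aux.tail_q_eval hw0pos]
          _ = _ := by ring
      · intro w hw
        have hwpos : (0:ℝ) < w := lt_trans hw0pos hw
        rw [norm_mul, Complex.norm_real, Real.norm_eq_abs]
        have h1 : |K0aux.gg' w| = 2 * w / ((2 + w ^ 2) * Real.sqrt (2 + w ^ 2)) := by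
          unfold K0aux.gg'
          rw [abs_div, abs_neg, abs_of_nonneg (by positivity),
            abs_of_nonneg (by positivity)]
        have hb2 := K0aux.psi_le2 z hre hz hwpos
        rw [h1]
        calc 2 * w / ((2 + w ^ 2) * Real.sqrt (2 + w ^ 2)) * ‖K0aux.psi z w‖ ≤
            2 * w / ((2 + w ^ 2) * Real.sqrt (2 + w ^ 2)) *
              (Real.exp (-z.re) * (Real.sqrt π / (2 * Real.sqrt r) + 1 / (r * w))) := by
              apply mul_le_mul_of_nonneg_left hb2 (by positivity)
          _ = C1 * (2 * w / ((2 + w ^ 2) * Real.sqrt (2 + w ^ 2))) +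
              C2 * (2 / ((2 + w ^ 2) * Real.sqrt (2 + w ^ 2))) := by
              have hD : ((2 + w ^ 2) * Real.sqrt (2 + w ^ 2)) ≠ 0 := by positivity
              have hw' : w ≠ 0 := hwpos.ne'
              have hr' : r ≠ 0 := hr0.ne'
              rw [hC1, hC2]
              field_simp
    -- numeric conclusion
    have hc1 : (1.25:ℝ) ≤ Real.sqrt (π/2) := by
      rw [show (1.25:ℝ) = Real.sqrt (1.25 ^ 2) by rw [Real.sqrt_sq (by norm_num : (0:ℝ) ≤ 1.25)]]
      exact Real.sqrt_le_sqrt (by nlinarith [Real.pi_gt_d6])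
    have hc2 : Real.sqrt (π/2) ≤ 1.2534 := by
      rw [show (1.2534:ℝ) = Real.sqrt (1.2534 ^ 2) by
        rw [Real.sqrt_sq (by norm_num : (0:ℝ) ≤ 1.2534)]]
      exact Real.sqrt_le_sqrt (by nlinarith [Real.pi_lt_d6])
    have hnum := K0aux.num_final hs0 hs1 hv2 hv1 hc1 hc2
    have hsqrtpi : Real.sqrt π = Real.sqrt 2 * Real.sqrt (π/2) := by
      rw [← Real.sqrt_mul (by norm_num : (0:ℝ) ≤ 2), show (2:ℝ) * (π/2) = π by ring]
    have hs2pos : (0:ℝ) < Real.sqrt 2 := Real.sqrt_pos.2 (by norm_num)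
    have hsum : Real.exp (-z.re) / Real.sqrt 2 * (w0 ^ 3 / 3) +
        (Real.exp (-z.re) * (Real.sqrt π / (2 * Real.sqrt r)) * (2 / Real.sqrt (2 + w0 ^ 2)) +
          Real.exp (-z.re) * r⁻¹ * (1 - w0 / Real.sqrt (2 + w0 ^ 2))) ≤
        Real.exp (-z.re) * (2 * s) := by
      have hLHSeq : Real.exp (-z.re) / Real.sqrt 2 * (w0 ^ 3 / 3) +
          (Real.exp (-z.re) * (Real.sqrt π / (2 * Real.sqrt r)) * (2 / Real.sqrt (2 + w0 ^ 2)) +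
            Real.exp (-z.re) * r⁻¹ * (1 - w0 / Real.sqrt (2 + w0 ^ 2))) =
          Real.exp (-z.re) *
            ((2/3) * s ^ 3 + Real.sqrt (π/2) * s / v + s ^ 2 - s ^ 3 / v) := by
        rw [h2w0, hsr, hsqrtpi, hw0s, ← hsq]
        have hsq2 : Real.sqrt 2 ^ 2 = 2 := Real.sq_sqrt (by norm_num)
        field_simp
        ring_nf
        rw [hsq2]
        ring
      rw [hLHSeq]
      exact mul_le_mul_of_nonneg_left hnum (Real.exp_pos _).le
    have hrpow : r ^ (-(1:ℝ)/2) = s := by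
      rw [show (-(1:ℝ)/2) = -(1/2) by ring, Real.rpow_neg hr0.le, ← Real.sqrt_eq_rpow,
        hs, Real.sqrt_inv]
    rw [hrpow]
    calc ‖L0‖ ≤ (∫ w in Ioc (0:ℝ) w0, ‖(K0aux.gg' w : ℂ) * K0aux.psi z w‖) +
          ∫ w in Ioi w0, ‖(K0aux.gg' w : ℂ) * K0aux.psi z w‖ := by rw [← hsp]; exact hn1
      _ ≤ Real.exp (-z.re) / Real.sqrt 2 * (w0 ^ 3 / 3) +
          (Real.exp (-z.re) * (Real.sqrt π / (2 * Real.sqrt r)) * (2 / Real.sqrt (2 + w0 ^ 2)) +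
            Real.exp (-z.re) * r⁻¹ * (1 - w0 / Real.sqrt (2 + w0 ^ 2))) := add_le_add hp1 hp2
      _ ≤ Real.exp (-z.re) * (2 * s) := hsum
      _ = 2 * s * Real.exp (-z.re) := by ring
end
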